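/- arXiv:2107.09942 — 3 statements merged into one kernel-verified Lean document; each statement's English description precedes it below -/
import Mathlib

section
/- The separatrix parametrization σ = (λ_h, Λ_h) is defined for all t ∈ ℝ, satisfies σ(t) → (0,0) as t → ±∞, and the function q(t) := cos(λ_h(t)/2) satisfies q(0) = a₊, q(t) ∈ [a₊, 1) for all t ∈ ℝ, and the differential equation (q')² = (3/q)·(q − 1)²·(q + 1)·(q − a₋)·(q − a₊) on ℝ. -/
noncomputable section

/-- The potential `V(λ) = 1 - cos λ - 1/√(2 + 2 cos λ)`. -/
def Vpot (l : ℝ) : ℝ := 1 - Real.cos l - 1 / Real.sqrt (2 + 2 * Real.cos l)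

def aplus : ℝ := -(1 / 2) + Real.sqrt 2 / 2
def aminus : ℝ := -(1 / 2) - Real.sqrt 2 / 2

/-- `(λ,Λ)` is a (global) solution of the Hamiltonian system associated to
`H_pend(λ,Λ) = -(3/2)Λ² + V(λ)`. -/
def SepSolution (lam Lam : ℝ → ℝ) : Prop :=
  (∀ t, HasDerivAt lam (-3 * Lam t) t) ∧
  (∀ t, HasDerivAt Lam
    (-Real.sin (lam t) * (1 - (2 + 2 * Real.cos (lam t)) ^ (-(3 : ℝ) / 2))) t)

namespace Sep

open Real Filter Set intervalIntegral

lemma sqrt2_sq : Real.sqrt 2 ^ 2 = 2 := Real.sq_sqrt (by norm_num)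

lemma sqrt2_gt : (1.4 : ℝ) < Real.sqrt 2 := by
  nlinarith [sqrt2_sq, Real.sqrt_nonneg 2]

lemma sqrt2_lt : Real.sqrt 2 < 1.5 := by
  nlinarith [sqrt2_sq, Real.sqrt_nonneg 2]

lemma aplus_pos : 0 < aplus := by unfold aplus; nlinarith [sqrt2_gt]

lemma aplus_lt : aplus < 1 / 2 := by unfold aplus; nlinarith [sqrt2_lt]

lemma aminus_neg : aminus < 0 := by unfold aminus; nlinarith [sqrt2_gt]

lemma aminus_eq : aminus = -1 - aplus := by unfold aplus aminus; ring

lemma aplus_quad : 4 * aplus ^ 2 + 4 * aplus - 1 = 0 := by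
  unfold aplus; nlinarith [sqrt2_sq]

def u1 : ℝ := Real.sqrt (1 - aplus)

lemma u1_sq : u1 ^ 2 = 1 - aplus :=
  Real.sq_sqrt (by nlinarith [aplus_lt])

lemma u1_pos : 0 < u1 := Real.sqrt_pos.2 (by nlinarith [aplus_lt])

/-- domain of the `u`-variable -/
def I : Set ℝ := Set.Ioo (-u1) u1

lemma isOpen_I : IsOpen I := isOpen_Ioo

lemma zero_mem_I : (0 : ℝ) ∈ I := ⟨neg_neg_iff_pos.mpr u1_pos, u1_pos⟩

def G (q : ℝ) : ℝ := 3 / q * (q - 1) ^ 2 * (q + 1) * (q - aminus)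

def Hf (q : ℝ) : ℝ := 3 * (1 - q) * (q - aminus) / q

lemma q_mem {u : ℝ} (hu : u ∈ I) :
    aplus ≤ aplus + u ^ 2 ∧ aplus + u ^ 2 < 1 := by
  obtain ⟨h1, h2⟩ := hu
  constructor
  · nlinarith [sq_nonneg u]
  · have : u ^ 2 < u1 ^ 2 := by
      rcases le_or_gt 0 u with h | h
      · nlinarith
      · nlinarith
    nlinarith [u1_sq]

lemma G_pos {q : ℝ} (h0 : 0 < q) (h1 : q < 1) : 0 < G q := by
  have h2 : 0 < (q - 1) ^ 2 := by nlinarith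
  have := aminus_neg
  unfold G
  have h3 : 0 < 3 / q := by positivity
  nlinarith [mul_pos (mul_pos (mul_pos h3 h2) (by linarith : (0:ℝ) < q + 1))
    (by linarith : (0:ℝ) < q - aminus)]

lemma Hf_pos {q : ℝ} (h0 : 0 < q) (h1 : q < 1) : 0 < Hf q := by
  have := aminus_neg
  have h2 : 0 < q - aminus := by linarith
  have h3 : 0 < 1 - q := by linarith
  unfold Hf
  positivity

lemma G_eq_Hf {q : ℝ} (h0 : q ≠ 0) : G q = Hf q * (1 - q ^ 2) := by
  unfold G Hf; field_simp; ring

/-- the integrand of the time map -/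
def fI (v : ℝ) : ℝ := 2 / Real.sqrt (G (aplus + v ^ 2))

lemma fI_pos {v : ℝ} (hv : v ∈ I) : 0 < fI v := by
  have hq := q_mem hv
  have h0 : 0 < aplus + v ^ 2 := by nlinarith [aplus_pos, sq_nonneg v]
  have := G_pos h0 hq.2
  unfold fI
  positivity

lemma fI_continuousAt {v : ℝ} (hv : v ∈ I) : ContinuousAt fI v := by
  have hq := q_mem hv
  have h0 : 0 < aplus + v ^ 2 := by nlinarith [aplus_pos, sq_nonneg v]
  have hG := G_pos h0 hq.2
  have hqc : ContinuousAt (fun w : ℝ => aplus + w ^ 2) v := by fun_prop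
  have hGc : ContinuousAt G (aplus + v ^ 2) := by
    unfold G
    have : ContinuousAt (fun q : ℝ => 3 / q) (aplus + v ^ 2) :=
      ContinuousAt.div continuousAt_const continuousAt_id h0.ne'
    fun_prop (disch := exact h0.ne')
  have hcomp : ContinuousAt (fun w : ℝ => G (aplus + w ^ 2)) v :=
    ContinuousAt.comp (g := G) (x := v) hGc hqc
  have : ContinuousAt (fun w : ℝ => Real.sqrt (G (aplus + w ^ 2))) v := hcomp.sqrt
  exact ContinuousAt.div continuousAt_const this (by positivity)

lemma fI_continuousOn : ContinuousOn fI I := fun v hv =>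
  (fI_continuousAt hv).continuousWithinAt

lemma I_ordConnected : Set.OrdConnected I := Set.ordConnected_Ioo

/-- the time map -/
def T (u : ℝ) : ℝ := ∫ v in (0:ℝ)..u, fI v

lemma uIcc_subset_I {u : ℝ} (hu : u ∈ I) : Set.uIcc 0 u ⊆ I :=
  Set.OrdConnected.uIcc_subset I_ordConnected zero_mem_I hu

lemma T_intervalIntegrable {u : ℝ} (hu : u ∈ I) :
    IntervalIntegrable fI MeasureTheory.volume 0 u :=
  (fI_continuousOn.mono (uIcc_subset_I hu)).intervalIntegrable

lemma T_hasDerivAt {u : ℝ} (hu : u ∈ I) : HasDerivAt T (fI u) u :=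
  intervalIntegral.integral_hasDerivAt_right (T_intervalIntegrable hu)
    (ContinuousOn.stronglyMeasurableAtFilter isOpen_I fI_continuousOn u hu)
    (fI_continuousAt hu)

lemma T_continuousOn : ContinuousOn T I := fun u hu =>
  ((T_hasDerivAt hu).continuousAt).continuousWithinAt

lemma T_strictMonoOn : StrictMonoOn T I := by
  apply strictMonoOn_of_deriv_pos (convex_Ioo _ _) T_continuousOn
  intro x hx
  rw [show interior (Set.Ioo (-u1) u1) = I from isOpen_I.interior_eq] at hx
  rw [(T_hasDerivAt hx).deriv]
  exact fI_pos hx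

lemma T_zero : T 0 = 0 := intervalIntegral.integral_same

lemma fI_even (v : ℝ) : fI (-v) = fI v := by unfold fI; rw [neg_pow]; ring_nf

lemma T_neg {u : ℝ} : T (-u) = -T u := by
  have : T u = ∫ v in (0:ℝ)..u, fI (-v) := by
    unfold T; congr 1; ext v; rw [fI_even]
  rw [this, intervalIntegral.integral_comp_neg fI]
  unfold T
  rw [neg_zero, intervalIntegral.integral_symm]


/-! ### Divergence of the time map and surjectivity -/

def cB : ℝ := 1 / (Real.sqrt (18 / aplus) * u1)

lemma sqrtC_pos : 0 < Real.sqrt (18 / aplus) :=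
  Real.sqrt_pos.2 (by have := aplus_pos; positivity)

lemma cB_pos : 0 < cB := by
  unfold cB
  have := Real.sqrt_pos.2 (show 0 < 18 / aplus by have := aplus_pos; positivity)
  have := u1_pos
  positivity

lemma fI_lower {v : ℝ} (h0 : 0 ≤ v) (h1 : v < u1) : cB / (u1 - v) ≤ fI v := by
  have hap := aplus_pos
  have hal := aplus_lt
  set q := aplus + v ^ 2 with hqdef
  have hq0 : 0 < q := by positivity
  have hq1 : q < 1 := by
    have : v ^ 2 < u1 ^ 2 := by nlinarith
    nlinarith [u1_sq]
  have hqa : aplus ≤ q := by nlinarith [sq_nonneg v]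
  have hC : G q ≤ 18 / aplus * (1 - q) ^ 2 := by
    have h2 : (q + 1) * (q - aminus) ≤ 6 := by
      rw [aminus_eq]; nlinarith
    have h3 : 3 / q ≤ 3 / aplus := by
      apply div_le_div_of_nonneg_left (by norm_num) hap hqa
    have h4 : 0 < 3 / q := by positivity
    have h5 : 0 ≤ (q + 1) * (q - aminus) := by
      rw [aminus_eq]; nlinarith
    have : G q = 3 / q * ((1 - q) ^ 2 * ((q + 1) * (q - aminus))) := by
      unfold G; ring
    rw [this]
    calc 3 / q * ((1 - q) ^ 2 * ((q + 1) * (q - aminus)))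
        ≤ 3 / aplus * ((1 - q) ^ 2 * 6) := by
          apply mul_le_mul h3 _ (by positivity) (by positivity)
          exact mul_le_mul_of_nonneg_left h2 (by positivity)
      _ = 18 / aplus * (1 - q) ^ 2 := by ring
  have hsqle : Real.sqrt (G q) ≤ Real.sqrt (18 / aplus) * (1 - q) := by
    have : Real.sqrt (G q) ≤ Real.sqrt (18 / aplus * (1 - q) ^ 2) :=
      Real.sqrt_le_sqrt hC
    rwa [Real.sqrt_mul (by positivity), Real.sqrt_sq (by linarith)] at this
  have hGpos : 0 < G q := G_pos hq0 hq1
  have hsG : 0 < Real.sqrt (G q) := Real.sqrt_pos.2 hGpos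
  have huv : 0 < u1 - v := by linarith
  show cB / (u1 - v) ≤ 2 / Real.sqrt (G q)
  rw [div_le_div_iff₀ huv (by positivity : (0:ℝ) < Real.sqrt (G q))]
  have h1q : 1 - q = (u1 - v) * (u1 + v) := by nlinarith [u1_sq]
  have hsC := sqrtC_pos
  have hu1 := u1_pos
  calc cB * Real.sqrt (G q) ≤ cB * (Real.sqrt (18 / aplus) * (1 - q)) := by
        apply mul_le_mul_of_nonneg_left hsqle cB_pos.le
    _ = (1 - q) / u1 := by
        unfold cB; field_simp
    _ = (u1 - v) * (u1 + v) / u1 := by rw [h1q]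
    _ ≤ 2 * (u1 - v) := by
        rw [div_le_iff₀ hu1]; nlinarith

lemma T_lower {u : ℝ} (h0 : 0 ≤ u) (h1 : u < u1) :
    cB * Real.log (u1 / (u1 - u)) ≤ T u := by
  have hu1 := u1_pos
  have hmemI : u ∈ I := ⟨by linarith, h1⟩
  have hcont : ContinuousOn (fun v : ℝ => cB / (u1 - v)) (Set.uIcc 0 u) := by
    apply ContinuousOn.div continuousOn_const (by fun_prop)
    intro v hv
    rw [Set.uIcc_of_le h0] at hv
    have := hv.2
    intro hcontra
    have : v < u1 := lt_of_le_of_lt hv.2 h1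
    linarith [sub_eq_zero.mp hcontra]
  have hint1 : IntervalIntegrable (fun v : ℝ => cB / (u1 - v))
      MeasureTheory.volume 0 u := hcont.intervalIntegrable
  have hmono : ∫ v in (0:ℝ)..u, cB / (u1 - v) ≤ T u := by
    apply intervalIntegral.integral_mono_on h0 hint1 (T_intervalIntegrable hmemI)
    intro v hv
    exact fI_lower hv.1 (lt_of_le_of_lt hv.2 h1)
  have hcalc : ∫ v in (0:ℝ)..u, cB / (u1 - v) = cB * Real.log (u1 / (u1 - u)) := by
    have : ∀ v : ℝ, cB / (u1 - v) = cB * (fun x : ℝ => 1 / x) (u1 - v) := by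
      intro v
      show cB / (u1 - v) = cB * (1 / (u1 - v))
      rw [mul_one_div]
    rw [intervalIntegral.integral_congr (fun v _ => this v),
      intervalIntegral.integral_const_mul,
      intervalIntegral.integral_comp_sub_left (fun x : ℝ => 1 / x) u1]
    rw [sub_zero, integral_one_div]
    intro hmem
    rw [Set.mem_uIcc] at hmem
    rcases hmem with ⟨ha, _⟩ | ⟨_, hb⟩
    · linarith
    · linarith
  linarith [hcalc ▸ hmono]

lemma exists_T_ge (t : ℝ) : ∃ u, 0 ≤ u ∧ u < u1 ∧ t ≤ T u := by
  have hc := cB_pos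
  have hu1 := u1_pos
  set m := max t 0 with hm
  set e := Real.exp (-(m / cB)) with he
  have he0 : 0 < e := Real.exp_pos _
  have he1 : e ≤ 1 := by
    rw [he, Real.exp_le_one_iff]
    have : 0 ≤ m / cB := by positivity
    linarith
  refine ⟨u1 - u1 * e, ?_, ?_, ?_⟩
  · nlinarith
  · nlinarith
  · have hlow := T_lower (u := u1 - u1 * e) (by nlinarith) (by nlinarith)
    have : u1 - (u1 - u1 * e) = u1 * e := by ring
    rw [this] at hlow
    have hdiv : u1 / (u1 * e) = e⁻¹ := by field_simp
    rw [hdiv, Real.log_inv, he, Real.log_exp] at hlow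
    have : cB * - -(m / cB) = m := by field_simp
    rw [this] at hlow
    exact le_trans (le_max_left t 0) hlow

lemma exists_T_eq (t : ℝ) : ∃ u ∈ I, T u = t := by
  obtain ⟨uh, huh0, huh1, huht⟩ := exists_T_ge t
  obtain ⟨ul, hul0, hul1, hult⟩ := exists_T_ge (-t)
  have hu1 := u1_pos
  have hhi : uh ∈ I := ⟨by linarith, huh1⟩
  have hlo : -ul ∈ I := ⟨by linarith, by linarith⟩
  have hTlo : T (-ul) ≤ t := by rw [T_neg]; linarith
  have hsub : Set.uIcc (-ul) uh ⊆ I :=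
    Set.OrdConnected.uIcc_subset I_ordConnected hlo hhi
  have hmem : t ∈ Set.uIcc (T (-ul)) (T uh) := Set.mem_uIcc.2 (Or.inl ⟨hTlo, huht⟩)
  obtain ⟨u, hu, hTu⟩ := intermediate_value_uIcc (T_continuousOn.mono hsub) hmem
  exact ⟨u, hsub hu, hTu⟩

/-! ### The inverse of the time map -/

def usol (t : ℝ) : ℝ := Classical.choose (exists_T_eq t)

lemma usol_mem (t : ℝ) : usol t ∈ I := (Classical.choose_spec (exists_T_eq t)).1

lemma T_usol (t : ℝ) : T (usol t) = t := (Classical.choose_spec (exists_T_eq t)).2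

lemma usol_strictMono : StrictMono usol := by
  intro s t hst
  by_contra hcon
  push_neg at hcon
  rcases eq_or_lt_of_le hcon with h | h
  · rw [← T_usol s, ← T_usol t, h] at hst; exact lt_irrefl _ hst
  · have := T_strictMonoOn (usol_mem t) (usol_mem s) h
    rw [T_usol s, T_usol t] at this
    linarith

lemma usol_zero : usol 0 = 0 := by
  apply T_strictMonoOn.injOn (usol_mem 0) zero_mem_I
  rw [T_usol, T_zero]

lemma usol_continuousAt (t : ℝ) : ContinuousAt usol t := by
  rw [Metric.continuousAt_iff]
  intro ε hε
  obtain ⟨hu1, hu2⟩ := usol_mem t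
  set u0 := usol t with hu0
  set a := max (u0 - ε) ((u0 - u1) / 2) with ha
  set b := min (u0 + ε) ((u0 + u1) / 2) with hb
  have haI : a ∈ I := by
    constructor
    · apply lt_of_lt_of_le _ (le_max_right _ _); linarith
    · apply lt_of_le_of_lt (max_le (by linarith) (by linarith)) (by linarith : u0 < u1)
  have hbI : b ∈ I := by
    constructor
    · exact lt_of_lt_of_le (by linarith : -u1 < u0) (le_trans (le_min (by linarith) (by linarith)) (le_refl b))
    · apply lt_of_le_of_lt (min_le_right _ _); linarith
  have hau0 : a < u0 := max_lt (by linarith) (by linarith)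
  have hu0b : u0 < b := lt_min (by linarith) (by linarith)
  have hTa : T a < t := by
    have := T_strictMonoOn haI (usol_mem t) hau0
    rwa [T_usol] at this
  have hTb : t < T b := by
    have := T_strictMonoOn (usol_mem t) hbI hu0b
    rwa [T_usol] at this
  refine ⟨min (t - T a) (T b - t), lt_min (by linarith) (by linarith), ?_⟩
  intro s hs
  rw [Real.dist_eq] at hs ⊢
  have hs1 : T a < s := by
    have := abs_lt.1 hs
    have := min_le_left (t - T a) (T b - t)
    linarith [this, (abs_lt.1 hs).1]
  have hs2 : s < T b := by
    have := min_le_right (t - T a) (T b - t)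
    linarith [(abs_lt.1 hs).2]
  have h1 : a < usol s := by
    by_contra hcon
    push_neg at hcon
    rcases eq_or_lt_of_le hcon with h | h
    · rw [← h, T_usol] at hs1; exact lt_irrefl _ hs1
    · have := T_strictMonoOn (usol_mem s) haI h
      rw [T_usol] at this; linarith
  have h2 : usol s < b := by
    by_contra hcon
    push_neg at hcon
    rcases eq_or_lt_of_le hcon with h | h
    · rw [h, T_usol] at hs2; exact lt_irrefl _ hs2
    · have := T_strictMonoOn hbI (usol_mem s) h
      rw [T_usol] at this; linarith
  have ha' : u0 - ε ≤ a := le_max_left _ _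
  have hb' : b ≤ u0 + ε := min_le_left _ _
  rw [abs_lt]
  constructor <;> linarith

lemma usol_hasDerivAt (t : ℝ) :
    HasDerivAt usol (Real.sqrt (G (aplus + usol t ^ 2)) / 2) t := by
  have hu := usol_mem t
  have hd := T_hasDerivAt hu
  have hpos := fI_pos hu
  have h := HasDerivAt.of_local_left_inverse (usol_continuousAt t) hd hpos.ne'
    (Filter.Eventually.of_forall T_usol)
  have : (fI (usol t))⁻¹ = Real.sqrt (G (aplus + usol t ^ 2)) / 2 := by
    unfold fI; rw [inv_div]
  rwa [this] at h


/-! ### The solution functions -/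

def qs (t : ℝ) : ℝ := aplus + usol t ^ 2

def lamSol (t : ℝ) : ℝ := 2 * Real.arccos (qs t)

def LamSol (t : ℝ) : ℝ := 2 / 3 * usol t * Real.sqrt (Hf (qs t))

lemma qs_lb (t : ℝ) : aplus ≤ qs t := (q_mem (usol_mem t)).1

lemma qs_ub (t : ℝ) : qs t < 1 := (q_mem (usol_mem t)).2

lemma qs_pos (t : ℝ) : 0 < qs t := lt_of_lt_of_le aplus_pos (qs_lb t)

lemma usol_sq (t : ℝ) : usol t ^ 2 = qs t - aplus := by unfold qs; ring

lemma sqrtG_split {q : ℝ} (h0 : 0 < q) (h1 : q < 1) :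
    Real.sqrt (G q) = Real.sqrt (Hf q) * Real.sqrt (1 - q ^ 2) :=
  (G_eq_Hf h0.ne') ▸ Real.sqrt_mul (Hf_pos h0 h1).le _

lemma usol_hasDerivAt' (t : ℝ) :
    HasDerivAt usol (Real.sqrt (G (qs t)) / 2) t := usol_hasDerivAt t

lemma qs_hasDerivAt (t : ℝ) :
    HasDerivAt qs (usol t * Real.sqrt (G (qs t))) t := by
  have h := ((usol_hasDerivAt' t).pow 2).const_add aplus
  have he : usol t * Real.sqrt (G (qs t)) =
      2 * usol t ^ (2 - 1) * (Real.sqrt (G (qs t)) / 2) := by ring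
  rw [he]
  exact h

lemma lamSol_hasDerivAt (t : ℝ) : HasDerivAt lamSol (-3 * LamSol t) t := by
  have hq0 := qs_pos t
  have hq1 := qs_ub t
  have hw : 0 < Real.sqrt (1 - qs t ^ 2) := Real.sqrt_pos.2 (by nlinarith)
  have hs : 0 < Real.sqrt (Hf (qs t)) := Real.sqrt_pos.2 (Hf_pos hq0 hq1)
  have harc : HasDerivAt Real.arccos (-(1 / Real.sqrt (1 - qs t ^ 2))) (qs t) :=
    Real.hasDerivAt_arccos (by linarith) hq1.ne
  have h := (harc.comp t (qs_hasDerivAt t)).const_mul 2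
  have he : -3 * LamSol t =
      2 * (-(1 / Real.sqrt (1 - qs t ^ 2)) * (usol t * Real.sqrt (G (qs t)))) := by
    rw [sqrtG_split hq0 hq1]
    unfold LamSol
    field_simp
  rw [he]
  exact h

lemma Hf_hasDerivAt {q : ℝ} (h0 : 0 < q) :
    HasDerivAt Hf ((3 * ((1 - q) - (q - aminus)) * q - 3 * (1 - q) * (q - aminus)) / q ^ 2) q := by
  have h1 : HasDerivAt (fun x : ℝ => 3 * (1 - x)) (3 * (0 - 1)) q :=
    (((hasDerivAt_const q (1:ℝ)).sub (hasDerivAt_id q))).const_mul 3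
  have h2 : HasDerivAt (fun x : ℝ => x - aminus) (1 : ℝ) q :=
    (hasDerivAt_id q).sub_const aminus
  have h3 := h1.mul h2
  have h4 := h3.div (hasDerivAt_id q) h0.ne'
  have he : (3 * ((1 - q) - (q - aminus)) * q - 3 * (1 - q) * (q - aminus)) / q ^ 2
      = ((3 * (0 - 1) * (q - aminus) + 3 * (1 - q) * 1) * q - 3 * (1 - q) * (q - aminus) * 1) / q ^ 2 := by
    ring
  rw [he]
  exact h4

lemma key_identity {q : ℝ} (h0 : 0 < q) :
    Hf q + (q - aplus) *
      ((3 * ((1 - q) - (q - aminus)) * q - 3 * (1 - q) * (q - aminus)) / q ^ 2)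
    = -6 * q + 3 / (4 * q ^ 2) := by
  have ham := aminus_eq
  have haq := aplus_quad
  unfold Hf
  rw [ham]
  field_simp
  linear_combination 3 * haq

lemma rpow_eq {q : ℝ} (h0 : 0 < q) :
    (2 + 2 * (2 * q ^ 2 - 1)) ^ (-(3:ℝ)/2) = 1 / (8 * q ^ 3) := by
  have h4 : (2 + 2 * (2 * q ^ 2 - 1)) = (2 * q) ^ (2:ℕ) := by ring
  rw [h4, ← Real.rpow_natCast (2 * q) 2, ← Real.rpow_mul (by positivity)]
  have : ((2:ℕ):ℝ) * (-(3:ℝ)/2) = -3 := by norm_num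
  rw [this, show (-3:ℝ) = ((-3:ℤ):ℝ) by norm_num, Real.rpow_intCast]
  rw [zpow_neg, show ((3:ℤ)) = ((3:ℕ):ℤ) by norm_num, zpow_natCast]
  rw [inv_eq_one_div]
  congr 1
  ring

lemma LamSol_hasDerivAt (t : ℝ) :
    HasDerivAt LamSol
      (-Real.sin (lamSol t) * (1 - (2 + 2 * Real.cos (lamSol t)) ^ (-(3:ℝ)/2))) t := by
  have hq0 := qs_pos t
  have hq1 := qs_ub t
  have hw : 0 < Real.sqrt (1 - qs t ^ 2) := Real.sqrt_pos.2 (by nlinarith)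
  have hHfp := Hf_pos hq0 hq1
  have hs : 0 < Real.sqrt (Hf (qs t)) := Real.sqrt_pos.2 hHfp
  have hHq : HasDerivAt (fun y => Hf (qs y))
      ((3 * ((1 - qs t) - (qs t - aminus)) * qs t - 3 * (1 - qs t) * (qs t - aminus)) / qs t ^ 2
        * (usol t * Real.sqrt (G (qs t)))) t :=
    (Hf_hasDerivAt hq0).comp t (qs_hasDerivAt t)
  have hsqH : HasDerivAt (fun y => Real.sqrt (Hf (qs y)))
      (1 / (2 * Real.sqrt (Hf (qs t))) *
        ((3 * ((1 - qs t) - (qs t - aminus)) * qs t - 3 * (1 - qs t) * (qs t - aminus)) / qs t ^ 2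
          * (usol t * Real.sqrt (G (qs t))))) t :=
    (Real.hasDerivAt_sqrt hHfp.ne').comp t hHq
  have hprod := ((usol_hasDerivAt' t).mul hsqH).const_mul (2/3 : ℝ)
  have hfun : LamSol = fun y => 2/3 * (usol y * Real.sqrt (Hf (qs y))) := by
    funext y; unfold LamSol; ring
  have hcos : Real.cos (lamSol t) = 2 * qs t ^ 2 - 1 := by
    show Real.cos (2 * Real.arccos (qs t)) = 2 * qs t ^ 2 - 1
    rw [Real.cos_two_mul, Real.cos_arccos (by linarith) hq1.le]
  have hsin : Real.sin (lamSol t) = 2 * Real.sqrt (1 - qs t ^ 2) * qs t := by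
    show Real.sin (2 * Real.arccos (qs t)) = 2 * Real.sqrt (1 - qs t ^ 2) * qs t
    rw [Real.sin_two_mul, Real.sin_arccos, Real.cos_arccos (by linarith) hq1.le]
  have hval : -Real.sin (lamSol t) * (1 - (2 + 2 * Real.cos (lamSol t)) ^ (-(3:ℝ)/2))
      = 2/3 * (Real.sqrt (G (qs t)) / 2 * Real.sqrt (Hf (qs t)) +
        usol t * (1 / (2 * Real.sqrt (Hf (qs t))) *
          ((3 * ((1 - qs t) - (qs t - aminus)) * qs t - 3 * (1 - qs t) * (qs t - aminus)) / qs t ^ 2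
            * (usol t * Real.sqrt (G (qs t)))))) := by
    rw [hcos, hsin, rpow_eq hq0, sqrtG_split hq0 hq1]
    have hs2 : Real.sqrt (Hf (qs t)) ^ 2 = Hf (qs t) := Real.sq_sqrt hHfp.le
    have hu2 : usol t ^ 2 = qs t - aplus := usol_sq t
    have hkey := key_identity (q := qs t) hq0
    set s := Real.sqrt (Hf (qs t)) with hsdef
    set w := Real.sqrt (1 - qs t ^ 2) with hwdef
    set Hd := (3 * ((1 - qs t) - (qs t - aminus)) * qs t
      - 3 * (1 - qs t) * (qs t - aminus)) / qs t ^ 2 with hHddef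
    have hRHS : (2:ℝ)/3 * (s * w / 2 * s +
        usol t * (1 / (2 * s) * (Hd * (usol t * (s * w)))))
        = w / 3 * (s ^ 2 + usol t ^ 2 * Hd) := by
      field_simp
    rw [hRHS, hs2, hu2, hkey]
    field_simp
    ring
  rw [hval, hfun]
  exact hprod


/-! ### Limits at infinity -/

open Filter Topology

lemma usol_tendsto_top : Tendsto usol atTop (𝓝 u1) := by
  rw [tendsto_order]
  constructor
  · intro a ha
    have hmem : max a 0 ∈ I := ⟨lt_of_lt_of_le (by linarith [u1_pos]) (le_max_right a 0),
      max_lt ha u1_pos⟩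
    filter_upwards [eventually_gt_atTop (T (max a 0))] with t ht
    have h1 : max a 0 < usol t := by
      by_contra hcon
      push_neg at hcon
      rcases eq_or_lt_of_le hcon with h | h
      · rw [← h, T_usol] at ht; exact lt_irrefl _ ht
      · have := T_strictMonoOn (usol_mem t) hmem h
        rw [T_usol] at this; linarith
    exact lt_of_le_of_lt (le_max_left a 0) h1
  · intro a ha
    filter_upwards with t
    exact lt_trans (usol_mem t).2 ha

lemma usol_tendsto_bot : Tendsto usol atBot (𝓝 (-u1)) := by
  rw [tendsto_order]
  constructor
  · intro a ha
    filter_upwards with t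
    exact lt_of_lt_of_le ha (le_of_lt (usol_mem t).1)
  · intro a ha
    have hmem : min a 0 ∈ I := ⟨lt_min ha (by linarith [u1_pos]),
      lt_of_le_of_lt (min_le_right a 0) u1_pos⟩
    filter_upwards [eventually_lt_atBot (T (min a 0))] with t ht
    have h1 : usol t < min a 0 := by
      by_contra hcon
      push_neg at hcon
      rcases eq_or_lt_of_le hcon with h | h
      · rw [h, T_usol] at ht; exact lt_irrefl _ ht
      · have := T_strictMonoOn hmem (usol_mem t) h
        rw [T_usol] at this; linarith
    exact lt_of_lt_of_le h1 (min_le_left a 0)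

lemma qs_tendsto (l : Filter ℝ) (c : ℝ) (h : Tendsto usol l (𝓝 c))
    (hc : aplus + c ^ 2 = 1) : Tendsto qs l (𝓝 1) := by
  have := ((h.pow 2).const_add aplus)
  rwa [hc] at this

lemma qs_tendsto_top : Tendsto qs atTop (𝓝 1) :=
  qs_tendsto _ _ usol_tendsto_top (by rw [u1_sq]; ring)

lemma qs_tendsto_bot : Tendsto qs atBot (𝓝 1) :=
  qs_tendsto _ _ usol_tendsto_bot (by rw [neg_pow, u1_sq]; ring)

lemma lamSol_tendsto (l : Filter ℝ) (h : Tendsto qs l (𝓝 1)) :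
    Tendsto lamSol l (𝓝 0) := by
  have harc : Tendsto (fun y => Real.arccos (qs y)) l (𝓝 (Real.arccos 1)) :=
    (Real.continuous_arccos.continuousAt).tendsto.comp h
  rw [Real.arccos_one] at harc
  have := harc.const_mul (2:ℝ)
  rw [mul_zero] at this
  exact this

lemma LamSol_tendsto (l : Filter ℝ) (c : ℝ) (hu : Tendsto usol l (𝓝 c))
    (h : Tendsto qs l (𝓝 1)) : Tendsto LamSol l (𝓝 0) := by
  have hHfc : ContinuousAt Hf 1 := by
    unfold Hf
    exact ContinuousAt.div (by fun_prop) continuousAt_id one_ne_zero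
  have hHf1 : Hf 1 = 0 := by unfold Hf; ring
  have h1 : Tendsto (fun y => Real.sqrt (Hf (qs y))) l (𝓝 0) := by
    have := (Real.continuous_sqrt.continuousAt.comp hHfc).tendsto.comp h
    simp only [Function.comp] at this
    rw [hHf1, Real.sqrt_zero] at this
    exact this
  have h2 := ((hu.const_mul (2/3:ℝ)).mul h1)
  rw [mul_zero] at h2
  exact h2

/-! ### The initial condition -/

lemma cos_half_eq {lam0 : ℝ} (hlam0 : lam0 ∈ Set.Ioo (2 * Real.pi / 3) Real.pi)
    (hV : Vpot lam0 = -(1 / 2)) : Real.cos (lam0 / 2) = aplus := by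
  have hpi := Real.pi_pos
  obtain ⟨hl1, hl2⟩ := hlam0
  have hx1 : Real.pi / 3 < lam0 / 2 := by linarith
  have hx2 : lam0 / 2 < Real.pi / 2 := by linarith
  have hc0 : 0 < Real.cos (lam0 / 2) :=
    Real.cos_pos_of_mem_Ioo ⟨by linarith, hx2⟩
  have hclt : Real.cos (lam0 / 2) < 1 / 2 := by
    have := Real.cos_lt_cos_of_nonneg_of_le_pi (by positivity) (by linarith) hx1
    rwa [Real.cos_pi_div_three] at this
  set c := Real.cos (lam0 / 2) with hcdef
  have hcoslam : Real.cos lam0 = 2 * c ^ 2 - 1 := by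
    rw [show lam0 = 2 * (lam0 / 2) by ring, Real.cos_two_mul]
  have h22 : 2 + 2 * Real.cos lam0 = (2 * c) ^ 2 := by rw [hcoslam]; ring
  have hsq : Real.sqrt (2 + 2 * Real.cos lam0) = 2 * c := by
    rw [h22, Real.sqrt_sq (by linarith)]
  unfold Vpot at hV
  rw [hsq, hcoslam] at hV
  have hpoly : 4 * c ^ 3 - 5 * c + 1 = 0 := by
    field_simp at hV
    linarith
  have hfac : (c - 1) * (4 * c ^ 2 + 4 * c - 1) = 0 := by linear_combination hpoly
  have hquad : 4 * c ^ 2 + 4 * c - 1 = 0 := by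
    rcases mul_eq_zero.1 hfac with h | h
    · exfalso
      have hc1 : c = 1 := by linarith
      rw [hc1] at hclt
      norm_num at hclt
    · exact h
  have h2c : (2 * c + 1) ^ 2 = 2 := by nlinarith
  have hsqrt2 : Real.sqrt 2 = 2 * c + 1 := by
    have h := Real.sqrt_sq (show (0:ℝ) ≤ 2 * c + 1 by linarith)
    rw [h2c] at h
    exact h
  unfold aplus
  rw [hsqrt2]
  ring

lemma cos_half_lam (t : ℝ) : Real.cos (lamSol t / 2) = qs t := by
  have hq0 := qs_pos t
  have hq1 := qs_ub t
  show Real.cos (2 * Real.arccos (qs t) / 2) = qs t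
  rw [show (2 : ℝ) * Real.arccos (qs t) / 2 = Real.arccos (qs t) by ring,
    Real.cos_arccos (by linarith) hq1.le]

end Sep

/-- The separatrix parametrization `σ = (λ_h, Λ_h)` with
`σ(0) = (λ₀, 0)` is defined for all `t ∈ ℝ`, tends to `(0,0)` as `t → ±∞`, and
`q(t) = cos(λ_h(t)/2)` satisfies `q(0) = a₊`, `q(t) ∈ [a₊, 1)` and
`(q')² = (3/q)(q-1)²(q+1)(q-a₋)(q-a₊)`. -/
theorem stmt1 (lam0 : ℝ) (hlam0 : lam0 ∈ Set.Ioo (2 * Real.pi / 3) Real.pi)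
    (hV : Vpot lam0 = -(1 / 2)) :
    ∃ lam Lam : ℝ → ℝ, SepSolution lam Lam ∧ lam 0 = lam0 ∧ Lam 0 = 0 ∧
      Filter.Tendsto (fun t => (lam t, Lam t)) Filter.atTop (nhds ((0 : ℝ), (0 : ℝ))) ∧
      Filter.Tendsto (fun t => (lam t, Lam t)) Filter.atBot (nhds ((0 : ℝ), (0 : ℝ))) ∧
      Real.cos (lam 0 / 2) = aplus ∧
      (∀ t : ℝ, Real.cos (lam t / 2) ∈ Set.Ico aplus 1) ∧
      (∀ t : ℝ,
        deriv (fun s => Real.cos (lam s / 2)) t ^ 2 =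
          3 / Real.cos (lam t / 2) * (Real.cos (lam t / 2) - 1) ^ 2 *
            (Real.cos (lam t / 2) + 1) * (Real.cos (lam t / 2) - aminus) *
            (Real.cos (lam t / 2) - aplus)) := by
  classical
  have hpi := Real.pi_pos
  refine ⟨Sep.lamSol, Sep.LamSol, ⟨Sep.lamSol_hasDerivAt, Sep.LamSol_hasDerivAt⟩, ?_, ?_, ?_, ?_, ?_, ?_, ?_⟩
  · -- lam 0 = lam0
    have hq0 : Sep.qs 0 = aplus := by
      unfold Sep.qs
      rw [Sep.usol_zero]
      ring
    have hc := Sep.cos_half_eq hlam0 hV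
    show 2 * Real.arccos (Sep.qs 0) = lam0
    rw [hq0, ← hc, Real.arccos_cos (by linarith [hlam0.1]) (by linarith [hlam0.2])]
    ring
  · -- Lam 0 = 0
    show 2 / 3 * Sep.usol 0 * Real.sqrt (Sep.Hf (Sep.qs 0)) = 0
    rw [Sep.usol_zero]
    ring
  · exact (Sep.lamSol_tendsto _ Sep.qs_tendsto_top).prodMk_nhds
      (Sep.LamSol_tendsto _ _ Sep.usol_tendsto_top Sep.qs_tendsto_top)
  · exact (Sep.lamSol_tendsto _ Sep.qs_tendsto_bot).prodMk_nhds
      (Sep.LamSol_tendsto _ _ Sep.usol_tendsto_bot Sep.qs_tendsto_bot)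
  · -- cos (lam 0 / 2) = aplus
    rw [Sep.cos_half_lam 0]
    unfold Sep.qs
    rw [Sep.usol_zero]
    ring
  · intro t
    rw [Sep.cos_half_lam t]
    exact ⟨Sep.qs_lb t, Sep.qs_ub t⟩
  · intro t
    have hfun : (fun s => Real.cos (Sep.lamSol s / 2)) = Sep.qs :=
      funext Sep.cos_half_lam
    rw [hfun, Sep.cos_half_lam t, (Sep.qs_hasDerivAt t).deriv]
    have hq0 := Sep.qs_pos t
    have hq1 := Sep.qs_ub t
    have hG : 0 ≤ Sep.G (Sep.qs t) := (Sep.G_pos hq0 hq1).le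
    have hu2 : Sep.usol t ^ 2 = Sep.qs t - aplus := Sep.usol_sq t
    rw [mul_pow, Real.sq_sqrt hG, hu2]
    unfold Sep.G
    ring
end
end

section
/- For λ ∈ (0, π), the equation V(λ) = −1/2 holds if and only if cos(λ/2) = (√2 − 1)/2 = a₊. Equivalently, for q = cos(λ/2) ∈ (0,1) the equation V(λ) = −1/2 is equivalent to 4q³ − 5q + 1 = 0, and 4q³ − 5q + 1 = (q − 1)(4q² + 4q − 1), whose roots are 1, a₊ and a₋. -/
/-! With `q = cos (λ/2)` one has `cos λ = 2q² - 1` and `√(2 + 2 cos λ) = 2|q|`, so on `(0, π)`,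
where `0 < q < 1`, the equation `V(λ) = -1/2` becomes `4q³ - 5q + 1 = 0` after clearing the
denominator `2q`. The cubic has the root `q = 1`, and the remaining quadratic `4q² + 4q - 1` has the
roots `a₊ ∈ (0, 1)` and `a₋ < 0`, so only `a₊` is left. -/

noncomputable section

open Real

lemma aplus_eq : aplus = (√2 - 1) / 2 := by
  unfold aplus; ring

lemma aminus_neg : aminus < 0 := by
  unfold aminus; linarith [sqrt_nonneg 2]

lemma Vpot_eq (l : ℝ) : Vpot l = 2 - 2 * cos (l / 2) ^ 2 - 1 / (2 * |cos (l / 2)|) := by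
  have hcos : cos l = 2 * cos (l / 2) ^ 2 - 1 := by
    rw [← cos_two_mul, mul_div_cancel₀ l two_ne_zero]
  rw [Vpot, hcos, show 2 + 2 * (2 * cos (l / 2) ^ 2 - 1) = (2 * cos (l / 2)) ^ 2 by ring,
    sqrt_sq_eq_abs, abs_mul, abs_two]
  ring

lemma Vpot_eq_neg_half_iff {l : ℝ} (hl : 0 < cos (l / 2)) :
    Vpot l = -(1 / 2) ↔ 4 * cos (l / 2) ^ 3 - 5 * cos (l / 2) + 1 = 0 := by
  rw [Vpot_eq, abs_of_pos hl]
  constructor <;> intro h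
  · field_simp at h
    linear_combination -h
  · field_simp
    linear_combination -h

lemma cubic_eq_mul (q : ℝ) : 4 * q ^ 3 - 5 * q + 1 = (q - 1) * (4 * q ^ 2 + 4 * q - 1) := by
  ring

lemma quadratic_eq_mul (q : ℝ) : 4 * q ^ 2 + 4 * q - 1 = 4 * ((q - aplus) * (q - aminus)) := by
  unfold aplus aminus
  linear_combination (sq_sqrt (zero_le_two : (0 : ℝ) ≤ 2))

lemma cubic_eq_zero_iff (q : ℝ) :
    (q - 1) * (4 * q ^ 2 + 4 * q - 1) = 0 ↔ q = 1 ∨ q = aplus ∨ q = aminus := by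
  simp only [quadratic_eq_mul, mul_eq_zero, four_ne_zero, false_or, sub_eq_zero]

lemma cos_half_mem_Ioo {l : ℝ} (hl : l ∈ Set.Ioo 0 π) : cos (l / 2) ∈ Set.Ioo 0 1 := by
  obtain ⟨h0, hπ⟩ := hl
  refine ⟨cos_pos_of_mem_Ioo ⟨by linarith, by linarith⟩, ?_⟩
  simpa using cos_lt_cos_of_nonneg_of_le_pi le_rfl (by linarith : l / 2 ≤ π) (half_pos h0)

/-- For `λ ∈ (0,π)`, `V(λ) = -1/2 ↔ cos(λ/2) = a₊ = (√2-1)/2`.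
Equivalently, with `q = cos(λ/2)`, `V(λ) = -1/2 ↔ 4q³ - 5q + 1 = 0`, and
`4q³ - 5q + 1 = (q-1)(4q²+4q-1)`, whose roots are `1`, `a₊` and `a₋`. -/
theorem stmt4 :
    (∀ l ∈ Set.Ioo (0 : ℝ) Real.pi, (Vpot l = -(1 / 2) ↔ Real.cos (l / 2) = aplus)) ∧
    (Real.sqrt 2 - 1) / 2 = aplus ∧
    (∀ l ∈ Set.Ioo (0 : ℝ) Real.pi,
      (Vpot l = -(1 / 2) ↔ 4 * Real.cos (l / 2) ^ 3 - 5 * Real.cos (l / 2) + 1 = 0)) ∧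
    (∀ q : ℝ, 4 * q ^ 3 - 5 * q + 1 = (q - 1) * (4 * q ^ 2 + 4 * q - 1)) ∧
    (∀ q : ℝ, (q - 1) * (4 * q ^ 2 + 4 * q - 1) = 0 ↔ q = 1 ∨ q = aplus ∨ q = aminus) := by
  have hcubic : ∀ l ∈ Set.Ioo 0 π,
      Vpot l = -(1 / 2) ↔ 4 * cos (l / 2) ^ 3 - 5 * cos (l / 2) + 1 = 0 :=
    fun l hl ↦ Vpot_eq_neg_half_iff (cos_half_mem_Ioo hl).1
  refine ⟨fun l hl ↦ ?_, aplus_eq.symm, hcubic, cubic_eq_mul, cubic_eq_zero_iff⟩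
  obtain ⟨hpos, hlt⟩ := cos_half_mem_Ioo hl
  rw [hcubic l hl, cubic_eq_mul, cubic_eq_zero_iff]
  have hne_one : cos (l / 2) ≠ 1 := hlt.ne
  have hne_aminus : cos (l / 2) ≠ aminus := (aminus_neg.trans hpos).ne'
  tauto
end
end

section
/- Let M > 0 and let R : E_κ → ℂ^{3×3} be analytic with entries satisfying ‖R_{1,1}‖_3 ≤ M, ‖R_{1,2}‖_{7/3} ≤ M, ‖R_{1,3}‖_{7/3} ≤ M, and, for j = 2, 3, ‖R_{j,1}‖_{2/3} ≤ M, ‖R_{j,2}‖_2 ≤ M, ‖R_{j,3}‖_2 ≤ M. Then, for κ large enough (depending on M and β₀), there exists b₅ > 0, depending only on M and β₀ (not on κ), such that for every Ψ = (Ψ₁, Ψ₂, Ψ₃) ∈ Y_{8/3} × Y_{4/3} × Y_{4/3}: ‖ℐ₁[Ψ]‖_{8/3} ≤ b₅·( κ^{−2}·‖Ψ₁‖_{8/3} + ‖Ψ₂‖_{4/3} + ‖Ψ₃‖_{4/3} ), and ‖ℐ_j[Ψ]‖_{4/3} ≤ b₅·κ^{−2}·( ‖Ψ₁‖_{8/3}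 + ‖Ψ₂‖_{4/3} + ‖Ψ₃‖_{4/3} ) for j = 2, 3. -/
noncomputable section

/-- The inner domain `D^u_κ = { U ∈ ℂ : |Im U| ≥ tan β₀ · Re U + κ }`. -/
def Du (β₀ κ : ℝ) : Set ℂ := {U : ℂ | Real.tan β₀ * U.re + κ ≤ |U.im|}

/-- `D^s_κ = -D^u_κ`. -/
def Ds (β₀ κ : ℝ) : Set ℂ := {U : ℂ | -U ∈ Du β₀ κ}

/-- `E_κ = D^u_κ ∩ D^s_κ ∩ {Im U < 0}`. -/
def Ek (β₀ κ : ℝ) : Set ℂ := Du β₀ κ ∩ Ds β₀ κ ∩ {U : ℂ | U.im < 0}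

/-- The weighted norm `‖φ‖_ν = sup_{U ∈ D} |U|^ν |φ(U)|` (valued in `ℝ≥0∞`). -/
def wnorm (D : Set ℂ) (ν : ℝ) (φ : ℂ → ℂ) : ENNReal :=
  ⨆ U ∈ D, ENNReal.ofReal (‖U‖ ^ ν * ‖φ U‖)

/-- The scalar product of a row of `R` with `Ψ`. -/
def rdot (a b c f g h : ℂ → ℂ) (S : ℂ) : ℂ := a S * f S + b S * g S + c S * h S

/-- `∫_{-i∞}^U Φ(S) dS` along the vertical ray `{U - is : s ≥ 0}`. -/
def B0 (Φ : ℂ → ℂ) (U : ℂ) : ℂ :=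
  Complex.I * ∫ s in Set.Ioi (0 : ℝ), Φ (U - Complex.I * (s : ℂ))

/-- `e^{iαU} ∫_{-i∞}^U e^{-iαS} Φ(S) dS` along the vertical ray. -/
def Balpha (α : ℝ) (Φ : ℂ → ℂ) (U : ℂ) : ℂ :=
  Complex.exp (Complex.I * (α : ℂ) * U) *
    (Complex.I * ∫ s in Set.Ioi (0 : ℝ),
      Complex.exp (-(Complex.I * (α : ℂ) * (U - Complex.I * (s : ℂ)))) *
        Φ (U - Complex.I * (s : ℂ)))

/-- `e^{-iU} ∫_{-iκ}^U e^{iS} Φ(S) dS` along the straight segment from `-iκ` to `U`. -/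
def BB (κ : ℝ) (Φ : ℂ → ℂ) (U : ℂ) : ℂ :=
  Complex.exp (-(Complex.I * U)) *
    ∫ t in (0 : ℝ)..1,
      Complex.exp (Complex.I * (-(Complex.I * (κ : ℂ)) + (t : ℂ) * (U + Complex.I * (κ : ℂ)))) *
        Φ (-(Complex.I * (κ : ℂ)) + (t : ℂ) * (U + Complex.I * (κ : ℂ))) *
        (U + Complex.I * (κ : ℂ))


open MeasureTheory Set

lemma max_rpow_integrable {p c : ℝ} (hp : 2 ≤ p) (hc : 0 < c) :
    IntegrableOn (fun s : ℝ => (max c s) ^ (-p)) (Set.Ioi 0) := by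
  have h1 : IntegrableOn (fun s : ℝ => (max c s) ^ (-p)) (Set.Ioc 0 c) := by
    have : IntegrableOn (fun _ : ℝ => c ^ (-p)) (Set.Ioc 0 c) := integrableOn_const measure_Ioc_lt_top.ne
    refine this.congr_fun (fun s hs => ?_) measurableSet_Ioc
    rw [max_eq_left hs.2]
  have h2 : IntegrableOn (fun s : ℝ => (max c s) ^ (-p)) (Set.Ioi c) := by
    refine (integrableOn_Ioi_rpow_of_lt (show -p < -1 by linarith) hc).congr_fun (fun s hs => ?_) measurableSet_Ioi
    rw [max_eq_right (le_of_lt hs)]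
  have : Set.Ioi (0:ℝ) = Set.Ioc 0 c ∪ Set.Ioi c := (Set.Ioc_union_Ioi_eq_Ioi hc.le).symm
  rw [this]
  exact h1.union h2

lemma max_rpow_integral {p c : ℝ} (hp : 2 ≤ p) (hc : 0 < c) :
    ∫ s in Set.Ioi (0:ℝ), (max c s) ^ (-p) ≤ 2 * c ^ (1 - p) := by
  have hsplit : Set.Ioi (0:ℝ) = Set.Ioc 0 c ∪ Set.Ioi c := (Set.Ioc_union_Ioi_eq_Ioi hc.le).symm
  have h1 : IntegrableOn (fun s : ℝ => (max c s) ^ (-p)) (Set.Ioc 0 c) :=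
    (max_rpow_integrable hp hc).mono_set (by rw [hsplit]; exact Set.subset_union_left)
  have h2 : IntegrableOn (fun s : ℝ => (max c s) ^ (-p)) (Set.Ioi c) :=
    (max_rpow_integrable hp hc).mono_set (by rw [hsplit]; exact Set.subset_union_right)
  rw [hsplit, setIntegral_union (by rw [Set.disjoint_left]; intro x hx hx'; exact absurd hx.2 (not_le.2 hx')) measurableSet_Ioi h1 h2]
  have e1 : ∫ s in Set.Ioc (0:ℝ) c, (max c s) ^ (-p) = c * c ^ (-p) := by
    rw [setIntegral_congr_fun measurableSet_Ioc (g := fun _ => c ^ (-p)) (fun s hs => by rw [max_eq_left hs.2])]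
    simp [Real.volume_Ioc, hc.le]
  have e2 : ∫ s in Set.Ioi c, (max c s) ^ (-p) = -c ^ (-p + 1) / (-p + 1) := by
    rw [setIntegral_congr_fun measurableSet_Ioi (g := fun s => s ^ (-p)) (fun s hs => by rw [max_eq_right (le_of_lt hs)])]
    exact integral_Ioi_rpow_of_lt (show -p < -1 by linarith) hc
  rw [e1, e2]
  have hc1 : c * c ^ (-p) = c ^ (1 - p) := by
    rw [show (1:ℝ) - p = 1 + -p by ring, Real.rpow_add hc, Real.rpow_one]
  have hc2 : -c ^ (-p + 1) / (-p + 1) = c ^ (1 - p) / (p - 1) := by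
    rw [show (-p + 1 : ℝ) = 1 - p by ring, neg_div, div_eq_mul_inv, div_eq_mul_inv,
      show (1 - p)⁻¹ = -(p-1)⁻¹ by rw [show (1-p : ℝ) = -(p-1) by ring, neg_inv]]
    ring
  rw [hc1, hc2]
  have hpos : (0:ℝ) < c ^ (1 - p) := Real.rpow_pos_of_pos hc _
  have : c ^ (1-p) / (p-1) ≤ c ^ (1-p) := by
    rw [div_le_iff₀ (by linarith)]
    nlinarith
  linarith

lemma Ek_re_abs {β₀ κ : ℝ} {U : ℂ} (hU : U ∈ Ek β₀ κ) :
    Real.tan β₀ * |U.re| + κ ≤ -U.im := by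
  obtain ⟨⟨h1, h2⟩, h3⟩ := hU
  simp only [Du, Ds, Set.mem_setOf_eq, Complex.neg_re, Complex.neg_im, abs_neg] at h1 h2 h3 ⊢
  rw [abs_of_neg h3] at h1 h2
  rcases abs_cases U.re with ⟨h, _⟩ | ⟨h, _⟩
  · rw [h]; exact h1
  · rw [h]; linarith

lemma Ek_im_le {β₀ κ : ℝ} (hβ : β₀ ∈ Set.Ioo 0 (Real.pi/2)) {U : ℂ} (hU : U ∈ Ek β₀ κ) :
    κ ≤ -U.im := by
  have h := Ek_re_abs hU
  have ht : 0 < Real.tan β₀ := Real.tan_pos_of_pos_of_lt_pi_div_two hβ.1 hβ.2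
  nlinarith [abs_nonneg U.re]

lemma Ek_norm_ge {β₀ κ : ℝ} (hβ : β₀ ∈ Set.Ioo 0 (Real.pi/2)) {U : ℂ} (hU : U ∈ Ek β₀ κ) :
    κ ≤ ‖U‖ := by
  have h1 := Ek_im_le hβ hU
  have h2 : |U.im| ≤ ‖U‖ := Complex.abs_im_le_norm U
  linarith [neg_le_abs U.im]

lemma Ek_ray {β₀ κ : ℝ} {U : ℂ} (hU : U ∈ Ek β₀ κ) {s : ℝ} (hs : 0 ≤ s) :
    U - Complex.I * s ∈ Ek β₀ κ := by
  obtain ⟨⟨h1, h2⟩, h3⟩ := hU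
  simp only [Du, Ds, Set.mem_setOf_eq, Complex.neg_re, Complex.neg_im, abs_neg] at h1 h2 h3
  have hre : (U - Complex.I * s).re = U.re := by simp
  have him : (U - Complex.I * s).im = U.im - s := by simp
  refine ⟨⟨?_, ?_⟩, ?_⟩ <;>
    simp only [Du, Ds, Set.mem_setOf_eq, Complex.neg_re, Complex.neg_im, abs_neg, hre, him]
  · rw [abs_of_neg h3] at h1; rw [abs_of_neg (by linarith)]; linarith
  · rw [abs_of_neg h3] at h2; rw [abs_of_neg (by linarith)]; linarith
  · linarith

lemma Ek_seg {β₀ κ : ℝ} (hβ : β₀ ∈ Set.Ioo 0 (Real.pi/2)) (hκ : 0 < κ) {U : ℂ}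
    (hU : U ∈ Ek β₀ κ) {t : ℝ} (ht0 : 0 ≤ t) (ht1 : t ≤ 1) :
    -(Complex.I * κ) + t * (U + Complex.I * κ) ∈ Ek β₀ κ := by
  have hre : (-(Complex.I * (κ:ℂ)) + (t:ℂ) * (U + Complex.I * κ)).re = t * U.re := by simp
  have him : (-(Complex.I * (κ:ℂ)) + (t:ℂ) * (U + Complex.I * κ)).im = -κ + t * (U.im + κ) := by
    simp only [Complex.add_im, Complex.neg_im, Complex.mul_im, Complex.mul_re, Complex.I_re,
      Complex.I_im, Complex.ofReal_re, Complex.ofReal_im, Complex.add_re]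
    ring
  have habs := Ek_re_abs hU
  have himU := Ek_im_le hβ hU
  have ht : 0 < Real.tan β₀ := Real.tan_pos_of_pos_of_lt_pi_div_two hβ.1 hβ.2
  have hval : -(-κ + t * (U.im + κ)) = κ + t * (-U.im - κ) := by ring
  have himneg : -κ + t * (U.im + κ) < 0 := by nlinarith
  have key : t * (Real.tan β₀ * |U.re|) ≤ t * (-U.im - κ) :=
    mul_le_mul_of_nonneg_left (by linarith) ht0
  refine ⟨⟨?_, ?_⟩, ?_⟩
  · simp only [Du, Ds, Set.mem_setOf_eq, Complex.neg_re, Complex.neg_im, abs_neg, hre, him]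
    rw [abs_of_neg himneg, hval]
    nlinarith [mul_le_mul_of_nonneg_left (mul_le_mul_of_nonneg_left (le_abs_self U.re) ht.le) ht0]
  · simp only [Du, Ds, Set.mem_setOf_eq, Complex.neg_re, Complex.neg_im, abs_neg, hre, him]
    rw [abs_of_neg himneg, hval]
    nlinarith [mul_le_mul_of_nonneg_left (mul_le_mul_of_nonneg_left (neg_abs_le U.re) ht.le) ht0]
  · simp only [Set.mem_setOf_eq, him]
    exact himneg

lemma poly_exp {a : ℝ} (ha : 0 ≤ a) : a * (1+a)^2 * Real.exp (-(a/2)) ≤ 864 := by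
  have h6 : 1 + a/6 ≤ Real.exp (a/6) := by
    have := Real.add_one_le_exp (a/6); linarith
  have hcube : (a/6)^3 ≤ Real.exp (a/2) := by
    have h1 : (a/6)^3 ≤ (1 + a/6)^3 := pow_le_pow_left₀ (by linarith) (by linarith) 3
    have h2 : (1 + a/6)^3 ≤ (Real.exp (a/6))^3 := pow_le_pow_left₀ (by linarith) h6 3
    have h3 : (Real.exp (a/6))^3 = Real.exp (a/2) := by
      rw [← Real.exp_nat_mul]; push_cast; ring_nf
    linarith
  have hinv : Real.exp (-(a/2)) * Real.exp (a/2) = 1 := by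
    rw [← Real.exp_add]; norm_num
  have hexp_pos : (0:ℝ) < Real.exp (-(a/2)) := Real.exp_pos _
  rcases le_or_gt a 2 with h | h
  · have : Real.exp (-(a/2)) ≤ 1 := Real.exp_le_one_iff.2 (by linarith)
    nlinarith
  · have key : a^3/216 * Real.exp (-(a/2)) ≤ 1 := by
      have := mul_le_mul_of_nonneg_right hcube hexp_pos.le
      calc a^3/216 * Real.exp (-(a/2)) = (a/6)^3 * Real.exp (-(a/2)) := by ring
        _ ≤ Real.exp (a/2) * Real.exp (-(a/2)) := mul_le_mul_of_nonneg_right hcube hexp_pos.le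
        _ = 1 := by rw [mul_comm]; exact hinv
    nlinarith

set_option maxHeartbeats 1000000 in
lemma seg_int_bound {κ a : ℝ} (hκ : 1 ≤ κ) (ha : 0 ≤ a) :
    a * (κ+a)^2 * ∫ t in (0:ℝ)..1, Real.exp (-(1-t)*a) * ((κ + t*a)^3)⁻¹ ≤ 440 / κ := by
  have hκ0 : (0:ℝ) < κ := by linarith
  set g : ℝ → ℝ := fun t => Real.exp (-(1-t)*a) * ((κ + t*a)^3)⁻¹ with hg
  have hden : ∀ t ∈ Set.Icc (0:ℝ) 1, (0:ℝ) < κ + t*a := fun t ht => by nlinarith [ht.1]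
  have hcont : ContinuousOn g (Set.Icc 0 1) := by
    apply ContinuousOn.mul
    · exact (Real.continuous_exp.comp (by continuity)).continuousOn
    · exact ((continuous_const.add (continuous_id.mul continuous_const)).pow 3).continuousOn.inv₀
        (fun t ht => pow_ne_zero 3 (hden t ht).ne')
  have hII : ∀ c d : ℝ, c ∈ Set.Icc (0:ℝ) 1 → d ∈ Set.Icc (0:ℝ) 1 → IntervalIntegrable g volume c d := by
    intro c d hc hd
    exact (hcont.mono (Set.uIcc_subset_Icc hc hd)).intervalIntegrable
  have hsplit : ∫ t in (0:ℝ)..1, g t =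
      (∫ t in (0:ℝ)..(1/2), g t) + ∫ t in (1/2:ℝ)..1, g t :=
    (intervalIntegral.integral_add_adjacent_intervals (hII 0 (1/2) (by norm_num) (by norm_num))
      (hII (1/2) 1 (by norm_num) (by norm_num))).symm
  -- bound on [0,1/2]
  have hb1 : ∫ t in (0:ℝ)..(1/2), g t ≤ 1/2 * (Real.exp (-(a/2)) * (κ^3)⁻¹) := by
    have := intervalIntegral.integral_mono_on (a := (0:ℝ)) (b := 1/2) (by norm_num)
      (hII 0 (1/2) (by norm_num) (by norm_num))
      (intervalIntegrable_const (c := Real.exp (-(a/2)) * (κ^3)⁻¹))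
      (fun t ht => ?_)
    · rw [intervalIntegral.integral_const,
        show ((1:ℝ)/2 - 0) • (Real.exp (-(a/2)) * (κ^3)⁻¹) = 1/2 * (Real.exp (-(a/2)) * (κ^3)⁻¹)
          by rw [smul_eq_mul]; norm_num] at this
      exact this
    · have ht0 := ht.1; have ht2 := ht.2
      have h1 : Real.exp (-(1-t)*a) ≤ Real.exp (-(a/2)) := by
        apply Real.exp_le_exp.2; nlinarith
      have h2 : ((κ + t*a)^3)⁻¹ ≤ (κ^3)⁻¹ := by
        apply inv_anti₀ (by positivity)
        apply pow_le_pow_left₀ hκ0.le; nlinarith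
      exact mul_le_mul h1 h2 (by positivity) (Real.exp_pos _).le
  -- bound on [1/2,1]
  set J : ℝ := ∫ t in (1/2:ℝ)..1, Real.exp (-(1-t)*a) with hJ
  have hJcont : ContinuousOn (fun t => Real.exp (-(1-t)*a)) (Set.Icc 0 1) :=
    (Real.continuous_exp.comp (by continuity)).continuousOn
  have hJII : IntervalIntegrable (fun t => Real.exp (-(1-t)*a)) volume (1/2) 1 :=
    ((Real.continuous_exp.comp (by continuity)).intervalIntegrable _ _)
  have hJnonneg : 0 ≤ J := intervalIntegral.integral_nonneg (by norm_num) (fun t _ => (Real.exp_pos _).le)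
  have hJhalf : J ≤ 1/2 := by
    have := intervalIntegral.integral_mono_on (a := (1/2:ℝ)) (b := 1) (by norm_num) hJII
      (intervalIntegrable_const (c := (1:ℝ)))
      (fun t ht => Real.exp_le_one_iff.2 (by nlinarith [ht.1, ht.2]))
    rw [intervalIntegral.integral_const,
      show ((1:ℝ) - 1/2) • (1:ℝ) = 1/2 by rw [smul_eq_mul]; norm_num] at this
    exact this
  have hJa : a * J ≤ 1 := by
    rcases le_or_gt a 2 with h | h
    · nlinarith
    · have ha0 : (0:ℝ) < a := by linarith
      have hJeq : J = (1 - Real.exp (-(a/2))) / a := by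
        have hrw : ∀ t : ℝ, -(1-t)*a = a*t - a := fun t => by ring
        have hderiv : ∀ t ∈ Set.uIcc (1/2:ℝ) 1,
            HasDerivAt (fun u => Real.exp (a*u - a) / a) (Real.exp (-(1-t)*a)) t := by
          intro t _
          have h1 : HasDerivAt (fun u : ℝ => a*u - a) a t := by
            simpa using ((hasDerivAt_id t).const_mul a).sub_const a
          have h2 := (h1.exp).div_const a
          rw [hrw t]
          rw [show Real.exp (a*t - a) = Real.exp (a*t - a) * a / a by field_simp]
          exact h2
        have := intervalIntegral.integral_eq_sub_of_hasDerivAt hderiv hJII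
        rw [hJ, this, show a * 1 - a = 0 by ring, show a * (1/2) - a = -(a/2) by ring,
          Real.exp_zero]
        ring
      rw [hJeq, mul_comm, div_mul_cancel₀ _ ha0.ne']
      linarith [(Real.exp_pos (-(a/2))).le]
  have hb2 : ∫ t in (1/2:ℝ)..1, g t ≤ ((κ + a/2)^3)⁻¹ * J := by
    have hmono := intervalIntegral.integral_mono_on (a := (1/2:ℝ)) (b := 1) (by norm_num)
      (hII (1/2) 1 (by norm_num) (by norm_num))
      (hJII.const_mul (((κ + a/2)^3)⁻¹))
      (fun t ht => ?_)
    · rw [intervalIntegral.integral_const_mul] at hmono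
      exact hmono
    · have h2 : ((κ + t*a)^3)⁻¹ ≤ ((κ + a/2)^3)⁻¹ := by
        apply inv_anti₀ (by positivity)
        apply pow_le_pow_left₀ (by positivity); nlinarith [ht.1]
      calc g t = Real.exp (-(1-t)*a) * ((κ + t*a)^3)⁻¹ := rfl
        _ ≤ Real.exp (-(1-t)*a) * ((κ + a/2)^3)⁻¹ :=
            mul_le_mul_of_nonneg_left h2 (Real.exp_pos _).le
        _ = ((κ + a/2)^3)⁻¹ * Real.exp (-(1-t)*a) := mul_comm _ _
  -- assemble
  have hfac : (0:ℝ) ≤ a * (κ+a)^2 := by positivity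
  have htot : ∫ t in (0:ℝ)..1, g t ≤ 1/2 * (Real.exp (-(a/2)) * (κ^3)⁻¹) + ((κ + a/2)^3)⁻¹ * J := by
    rw [hsplit]; exact add_le_add hb1 hb2
  have hmain := mul_le_mul_of_nonneg_left htot hfac
  refine le_trans hmain ?_
  -- term 1 : a(κ+a)^2 * 1/2 e^{-a/2} κ^{-3} ≤ 432/κ
  have ht1 : a * (κ+a)^2 * (1/2 * (Real.exp (-(a/2)) * (κ^3)⁻¹)) ≤ 432 / κ := by
    have hka : (κ+a)^2 ≤ κ^2 * (1+a)^2 := by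
      have h0 : κ + a ≤ κ * (1+a) := by nlinarith
      calc (κ+a)^2 ≤ (κ*(1+a))^2 := pow_le_pow_left₀ (by positivity) h0 2
        _ = κ^2 * (1+a)^2 := by ring
    have hpe := poly_exp ha
    have hexp := (Real.exp_pos (-(a/2))).le
    have step : a * (κ+a)^2 * (1/2 * (Real.exp (-(a/2)) * (κ^3)⁻¹)) ≤
        a * (κ^2 * (1+a)^2) * (1/2 * (Real.exp (-(a/2)) * (κ^3)⁻¹)) := by
      apply mul_le_mul_of_nonneg_right (mul_le_mul_of_nonneg_left hka ha) (by positivity)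
    refine step.trans ?_
    have heq : a * (κ^2 * (1+a)^2) * (1/2 * (Real.exp (-(a/2)) * (κ^3)⁻¹)) =
        (a * (1+a)^2 * Real.exp (-(a/2))) * (1/2 * (κ^2 * (κ^3)⁻¹)) := by ring
    rw [heq]
    have hκinv : κ^2 * (κ^3)⁻¹ = κ⁻¹ := by
      rw [show κ^3 = κ^2 * κ by ring, mul_inv, ← mul_assoc, mul_inv_cancel₀ (by positivity),
        one_mul]
    rw [hκinv]
    have h1 : (0:ℝ) ≤ 1/2 * κ⁻¹ := by positivity
    have h2 := mul_le_mul_of_nonneg_right hpe h1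
    refine h2.trans_eq ?_
    rw [div_eq_mul_inv]
    ring
  -- term 2 : a(κ+a)^2 ((κ+a/2)^3)⁻¹ J ≤ 8/κ
  have ht2 : a * (κ+a)^2 * (((κ + a/2)^3)⁻¹ * J) ≤ 8 / κ := by
    have hka_pos : (0:ℝ) < κ + a := by linarith
    have h1 : ((κ + a/2)^3)⁻¹ ≤ 8 * ((κ+a)^3)⁻¹ := by
      have hle : ((κ+a)/2)^3 ≤ (κ + a/2)^3 := pow_le_pow_left₀ (by positivity) (by linarith) 3
      have h2 : ((κ + a/2)^3)⁻¹ ≤ (((κ+a)/2)^3)⁻¹ := inv_anti₀ (by positivity) hle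
      refine h2.trans_eq ?_
      rw [div_pow, inv_div, div_eq_mul_inv, mul_comm]
      norm_num
      rw [mul_comm]
    have hpow : (κ+a)^2 * ((κ+a)^3)⁻¹ = (κ+a)⁻¹ := by
      rw [show (κ+a)^3 = (κ+a)^2 * (κ+a) by ring, mul_inv, ← mul_assoc,
        mul_inv_cancel₀ (by positivity), one_mul]
    have hainv : (κ+a)⁻¹ ≤ κ⁻¹ := inv_anti₀ hκ0 (by linarith)
    calc a * (κ+a)^2 * (((κ + a/2)^3)⁻¹ * J)
        ≤ a * (κ+a)^2 * ((8 * ((κ+a)^3)⁻¹) * J) := by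
          apply mul_le_mul_of_nonneg_left (mul_le_mul_of_nonneg_right h1 hJnonneg) (by positivity)
      _ = 8 * (a * J) * ((κ+a)^2 * ((κ+a)^3)⁻¹) := by ring
      _ = 8 * (a * J) * (κ+a)⁻¹ := by rw [hpow]
      _ ≤ 8 * 1 * κ⁻¹ := by
          apply mul_le_mul (by nlinarith) hainv (by positivity) (by norm_num)
      _ = 8 / κ := by rw [div_eq_mul_inv]; ring
  calc a * (κ+a)^2 * (1/2 * (Real.exp (-(a/2)) * (κ^3)⁻¹) + ((κ + a/2)^3)⁻¹ * J)
      = a * (κ+a)^2 * (1/2 * (Real.exp (-(a/2)) * (κ^3)⁻¹)) +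
        a * (κ+a)^2 * (((κ + a/2)^3)⁻¹ * J) := by ring
    _ ≤ 432 / κ + 8 / κ := add_le_add ht1 ht2
    _ = 440 / κ := by ring

lemma ray_norm_ge {U : ℂ} (him : U.im ≤ 0) {s : ℝ} (hs : 0 ≤ s) :
    max ‖U‖ s ≤ ‖U - Complex.I * s‖ := by
  have hre : (U - Complex.I * s).re = U.re := by simp
  have him' : (U - Complex.I * s).im = U.im - s := by simp
  rw [max_le_iff]
  constructor
  · rw [Complex.norm_def, Complex.norm_def]
    apply Real.sqrt_le_sqrt
    simp only [Complex.normSq_apply, hre, him']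
    nlinarith [mul_nonneg (neg_nonneg.2 him) hs]
  · rw [Complex.norm_def]
    rw [Real.le_sqrt hs (Complex.normSq_nonneg _)]
    simp only [Complex.normSq_apply, hre, him']
    nlinarith [mul_nonneg (neg_nonneg.2 him) hs, mul_self_nonneg U.re, mul_self_nonneg U.im]

lemma neg_two_rpow {κ r : ℝ} (hκ : 0 < κ) (h : κ ≤ r) : r ^ (-(2:ℝ)) ≤ (κ^2)⁻¹ := by
  have h1 := Real.rpow_le_rpow_of_nonpos hκ h (by norm_num : (-(2:ℝ)) ≤ 0)
  refine h1.trans_eq ?_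
  rw [show (-(2:ℝ)) = ((-2 : ℤ) : ℝ) by norm_num, Real.rpow_intCast, zpow_neg]
  congr 1

lemma comp2 {β₀ κ : ℝ} (hβ : β₀ ∈ Set.Ioo 0 (Real.pi/2)) (hκ : 1 ≤ κ) {K : ℝ} (hK : 0 ≤ K)
    {Φ : ℂ → ℂ} (hΦ : ∀ S ∈ Ek β₀ κ, ‖Φ S‖ ≤ K * ‖S‖ ^ (-(10:ℝ)/3))
    {U : ℂ} (hU : U ∈ Ek β₀ κ) :
    ‖U‖ ^ ((4:ℝ)/3) * ‖Balpha 1 Φ U‖ ≤ K / κ^2 := by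
  have hκ0 : (0:ℝ) < κ := lt_of_lt_of_le one_pos hκ
  have hrκ : κ ≤ ‖U‖ := Ek_norm_ge hβ hU
  have hr0 : (0:ℝ) < ‖U‖ := lt_of_lt_of_le hκ0 hrκ
  have him : U.im < 0 := hU.2
  set G : ℝ → ℝ := fun s => Real.exp U.im * (K * ‖U‖ ^ (-(10:ℝ)/3)) * Real.exp (-(1:ℝ)*s)
    with hG
  have hGint : IntegrableOn G (Set.Ioi (0:ℝ)) :=
    (exp_neg_integrableOn_Ioi 0 one_pos).const_mul _
  have hbound : ∀ s ∈ Set.Ioi (0:ℝ),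
      ‖Complex.exp (-(Complex.I * (1:ℝ) * (U - Complex.I * (s:ℂ)))) *
        Φ (U - Complex.I * (s:ℂ))‖ ≤ G s := by
    intro s hs
    have hs0 : (0:ℝ) ≤ s := (le_of_lt hs)
    have hSmem : U - Complex.I * s ∈ Ek β₀ κ := Ek_ray hU hs0
    have hSnorm : ‖U‖ ≤ ‖U - Complex.I * s‖ :=
      le_trans (le_max_left _ _) (ray_norm_ge him.le hs0)
    have hΦS := hΦ _ hSmem
    have hrp : ‖U - Complex.I * s‖ ^ (-(10:ℝ)/3) ≤ ‖U‖ ^ (-(10:ℝ)/3) :=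
      Real.rpow_le_rpow_of_nonpos hr0 hSnorm (by norm_num)
    have hexp : ‖Complex.exp (-(Complex.I * (1:ℝ) * (U - Complex.I * (s:ℂ))))‖
        = Real.exp (U.im - s) := by
      rw [Complex.norm_exp]
      congr 1
      simp [Complex.mul_re, Complex.mul_im]
    rw [norm_mul, hexp, hG]
    have h1 : ‖Φ (U - Complex.I * s)‖ ≤ K * ‖U‖ ^ (-(10:ℝ)/3) :=
      hΦS.trans (mul_le_mul_of_nonneg_left hrp hK)
    calc Real.exp (U.im - s) * ‖Φ (U - Complex.I * s)‖
        ≤ Real.exp (U.im - s) * (K * ‖U‖ ^ (-(10:ℝ)/3)) :=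
          mul_le_mul_of_nonneg_left h1 (Real.exp_pos _).le
      _ = Real.exp U.im * (K * ‖U‖ ^ (-(10:ℝ)/3)) * Real.exp (-(1:ℝ)*s) := by
          rw [show U.im - s = U.im + (-(1:ℝ)*s) by ring, Real.exp_add]; ring
  have key : ‖∫ s in Set.Ioi (0:ℝ),
      Complex.exp (-(Complex.I * (1:ℝ) * (U - Complex.I * (s:ℂ)))) *
        Φ (U - Complex.I * (s:ℂ))‖ ≤ ∫ s in Set.Ioi (0:ℝ), G s :=
    norm_integral_le_of_norm_le hGint
      ((ae_restrict_iff' measurableSet_Ioi).2 (Filter.Eventually.of_forall hbound))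
  have hGval : ∫ s in Set.Ioi (0:ℝ), G s = Real.exp U.im * (K * ‖U‖ ^ (-(10:ℝ)/3)) := by
    rw [hG]
    rw [MeasureTheory.integral_const_mul]
    have : ∫ s in Set.Ioi (0:ℝ), Real.exp (-(1:ℝ)*s) = 1 := by
      simp_rw [show ∀ s : ℝ, -(1:ℝ)*s = -s from fun s => by ring]
      exact integral_exp_neg_Ioi_zero
    rw [this, mul_one]
  have houter : ‖Complex.exp (Complex.I * ((1:ℝ):ℂ) * U)‖ = Real.exp (-U.im) := by
    rw [Complex.norm_exp]
    congr 1
    simp [Complex.mul_re]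
  have hBB : ‖Balpha 1 Φ U‖ ≤ K * ‖U‖ ^ (-(10:ℝ)/3) := by
    unfold Balpha
    rw [norm_mul, norm_mul, Complex.norm_I, one_mul, houter]
    calc Real.exp (-U.im) * ‖∫ s in Set.Ioi (0:ℝ),
          Complex.exp (-(Complex.I * ((1:ℝ):ℂ) * (U - Complex.I * (s:ℂ)))) *
            Φ (U - Complex.I * (s:ℂ))‖
        ≤ Real.exp (-U.im) * (Real.exp U.im * (K * ‖U‖ ^ (-(10:ℝ)/3))) := by
          apply mul_le_mul_of_nonneg_left _ (Real.exp_pos _).le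
          rw [← hGval]; exact key
      _ = K * ‖U‖ ^ (-(10:ℝ)/3) := by
          rw [← mul_assoc, ← Real.exp_add, neg_add_cancel, Real.exp_zero, one_mul]
  calc ‖U‖ ^ ((4:ℝ)/3) * ‖Balpha 1 Φ U‖
      ≤ ‖U‖ ^ ((4:ℝ)/3) * (K * ‖U‖ ^ (-(10:ℝ)/3)) :=
        mul_le_mul_of_nonneg_left hBB (Real.rpow_nonneg hr0.le _)
    _ = K * ‖U‖ ^ (-(2:ℝ)) := by
        rw [show (-(2:ℝ)) = (4:ℝ)/3 + (-(10:ℝ)/3) by norm_num, Real.rpow_add hr0]; ring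
    _ ≤ K * (κ^2)⁻¹ := mul_le_mul_of_nonneg_left (neg_two_rpow hκ0 hrκ) hK
    _ = K / κ^2 := by rw [div_eq_mul_inv]

lemma comp1 {β₀ κ : ℝ} (hβ : β₀ ∈ Set.Ioo 0 (Real.pi/2)) (hκ : 1 ≤ κ) {K1 K2 : ℝ}
    (hK1 : 0 ≤ K1) (hK2 : 0 ≤ K2) {Φ : ℂ → ℂ}
    (hΦ : ∀ S ∈ Ek β₀ κ, ‖Φ S‖ ≤ K1 * ‖S‖ ^ (-(17/3:ℝ)) + K2 * ‖S‖ ^ (-(11/3:ℝ)))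
    {U : ℂ} (hU : U ∈ Ek β₀ κ) :
    ‖U‖ ^ ((8:ℝ)/3) * ‖B0 Φ U‖ ≤ 2*K1/κ^2 + 2*K2 := by
  have hκ0 : (0:ℝ) < κ := lt_of_lt_of_le one_pos hκ
  have hrκ : κ ≤ ‖U‖ := Ek_norm_ge hβ hU
  have hr0 : (0:ℝ) < ‖U‖ := lt_of_lt_of_le hκ0 hrκ
  have him : U.im < 0 := hU.2
  set G : ℝ → ℝ := fun s => K1 * (max ‖U‖ s) ^ (-(17/3:ℝ)) + K2 * (max ‖U‖ s) ^ (-(11/3:ℝ))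
    with hG
  have hint1 : IntegrableOn (fun s : ℝ => (max ‖U‖ s) ^ (-(17/3:ℝ))) (Set.Ioi 0) :=
    max_rpow_integrable (by norm_num) hr0
  have hint2 : IntegrableOn (fun s : ℝ => (max ‖U‖ s) ^ (-(11/3:ℝ))) (Set.Ioi 0) :=
    max_rpow_integrable (by norm_num) hr0
  have hGint : IntegrableOn G (Set.Ioi 0) := (hint1.const_mul K1).add (hint2.const_mul K2)
  have hbound : ∀ s ∈ Set.Ioi (0:ℝ), ‖Φ (U - Complex.I * (s:ℂ))‖ ≤ G s := by
    intro s hs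
    have hs0 : (0:ℝ) ≤ s := le_of_lt hs
    have hSmem := Ek_ray hU hs0
    have hmax0 : (0:ℝ) < max ‖U‖ s := lt_of_lt_of_le hr0 (le_max_left _ _)
    have hSnorm : max ‖U‖ s ≤ ‖U - Complex.I * s‖ := ray_norm_ge him.le hs0
    have h1 : ‖U - Complex.I * (s:ℂ)‖ ^ (-(17/3:ℝ)) ≤ (max ‖U‖ s) ^ (-(17/3:ℝ)) :=
      Real.rpow_le_rpow_of_nonpos hmax0 hSnorm (by norm_num)
    have h2 : ‖U - Complex.I * (s:ℂ)‖ ^ (-(11/3:ℝ)) ≤ (max ‖U‖ s) ^ (-(11/3:ℝ)) :=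
      Real.rpow_le_rpow_of_nonpos hmax0 hSnorm (by norm_num)
    exact (hΦ _ hSmem).trans (add_le_add (mul_le_mul_of_nonneg_left h1 hK1)
      (mul_le_mul_of_nonneg_left h2 hK2))
  have hB : ‖B0 Φ U‖ ≤ ∫ s in Set.Ioi (0:ℝ), G s := by
    unfold B0
    rw [norm_mul, Complex.norm_I, one_mul]
    exact norm_integral_le_of_norm_le hGint
      ((ae_restrict_iff' measurableSet_Ioi).2 (Filter.Eventually.of_forall hbound))
  have hval : ∫ s in Set.Ioi (0:ℝ), G s ≤
      K1 * (2 * ‖U‖ ^ ((1:ℝ) - 17/3)) + K2 * (2 * ‖U‖ ^ ((1:ℝ) - 11/3)) := by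
    rw [hG, integral_add (hint1.const_mul K1) (hint2.const_mul K2),
      MeasureTheory.integral_const_mul, MeasureTheory.integral_const_mul]
    exact add_le_add
      (mul_le_mul_of_nonneg_left (max_rpow_integral (by norm_num) hr0) hK1)
      (mul_le_mul_of_nonneg_left (max_rpow_integral (by norm_num) hr0) hK2)
  have hBtot : ‖B0 Φ U‖ ≤ 2*K1 * ‖U‖ ^ (-(14/3:ℝ)) + 2*K2 * ‖U‖ ^ (-(8/3:ℝ)) := by
    refine (hB.trans hval).trans_eq ?_
    rw [show (1:ℝ) - 17/3 = -(14/3:ℝ) by norm_num, show (1:ℝ) - 11/3 = -(8/3:ℝ) by norm_num]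
    ring
  calc ‖U‖ ^ ((8:ℝ)/3) * ‖B0 Φ U‖
      ≤ ‖U‖ ^ ((8:ℝ)/3) * (2*K1 * ‖U‖ ^ (-(14/3:ℝ)) + 2*K2 * ‖U‖ ^ (-(8/3:ℝ))) :=
        mul_le_mul_of_nonneg_left hBtot (Real.rpow_nonneg hr0.le _)
    _ = 2*K1 * (‖U‖ ^ ((8:ℝ)/3) * ‖U‖ ^ (-(14/3:ℝ))) +
        2*K2 * (‖U‖ ^ ((8:ℝ)/3) * ‖U‖ ^ (-(8/3:ℝ))) := by ring
    _ = 2*K1 * ‖U‖ ^ (-(2:ℝ)) + 2*K2 := by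
        rw [← Real.rpow_add hr0, ← Real.rpow_add hr0,
          show (8:ℝ)/3 + -(14/3:ℝ) = -(2:ℝ) by norm_num,
          show (8:ℝ)/3 + -(8/3:ℝ) = 0 by norm_num, Real.rpow_zero, mul_one]
    _ ≤ 2*K1 * (κ^2)⁻¹ + 2*K2 := by
        have := neg_two_rpow hκ0 hrκ
        have h2 : (0:ℝ) ≤ 2*K1 := by linarith
        nlinarith
    _ = 2*K1/κ^2 + 2*K2 := by rw [div_eq_mul_inv]

lemma pow103 {κ c x : ℝ} (hκ : 1 ≤ κ) (hc : κ ≤ c) (hx : c ≤ x) :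
    x ^ (-(10:ℝ)/3) ≤ κ ^ (-(1:ℝ)/3) * (c^3)⁻¹ := by
  have hκ0 : (0:ℝ) < κ := lt_of_lt_of_le one_pos hκ
  have hc0 : (0:ℝ) < c := lt_of_lt_of_le hκ0 hc
  have hx0 : (0:ℝ) < x := lt_of_lt_of_le hc0 hx
  rw [show (-(10:ℝ)/3) = (-(1:ℝ)/3) + (-(3:ℝ)) by norm_num, Real.rpow_add hx0]
  have h1 : x ^ (-(1:ℝ)/3) ≤ κ ^ (-(1:ℝ)/3) :=
    Real.rpow_le_rpow_of_nonpos hκ0 (hc.trans hx) (by norm_num)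
  have h2 : x ^ (-(3:ℝ)) ≤ (c^3)⁻¹ := by
    rw [show (-(3:ℝ)) = ((-3:ℤ):ℝ) by norm_num, Real.rpow_intCast, zpow_neg,
      show ((3:ℤ)) = ((3:ℕ):ℤ) by norm_num, zpow_natCast]
    have hcx : (c:ℝ)^3 ≤ x^3 := pow_le_pow_left₀ hc0.le hx 3
    exact inv_anti₀ (by positivity) hcx

  exact mul_le_mul h1 h2 (Real.rpow_nonneg hx0.le _) (Real.rpow_nonneg hκ0.le _)

lemma comp3 {β₀ κ : ℝ} (hβ : β₀ ∈ Set.Ioo 0 (Real.pi/2)) (hκ : 1 ≤ κ) {K : ℝ} (hK : 0 ≤ K)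
    {Φ : ℂ → ℂ} (hΦ : ∀ S ∈ Ek β₀ κ, ‖Φ S‖ ≤ K * ‖S‖ ^ (-(10:ℝ)/3))
    {U : ℂ} (hU : U ∈ Ek β₀ κ) :
    ‖U‖ ^ ((4:ℝ)/3) * ‖BB κ Φ U‖ ≤ 440 * (1 + (Real.tan β₀)⁻¹)^3 * K / κ^2 := by
  have hκ0 : (0:ℝ) < κ := lt_of_lt_of_le one_pos hκ
  have ht : 0 < Real.tan β₀ := Real.tan_pos_of_pos_of_lt_pi_div_two hβ.1 hβ.2
  set tβ := Real.tan β₀ with htβ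
  set Cβ : ℝ := 1 + tβ⁻¹ with hCβ
  have hCβ1 : 1 ≤ Cβ := by
    rw [hCβ]
    have h : (0:ℝ) < tβ⁻¹ := inv_pos.2 ht
    linarith
  have hCβ0 : 0 < Cβ := lt_of_lt_of_le one_pos hCβ1
  set a : ℝ := -U.im - κ with ha
  have ha0 : 0 ≤ a := by have := Ek_im_le hβ hU; rw [ha]; linarith
  set L : ℝ := ‖U + Complex.I * κ‖ with hL
  have hL0 : 0 ≤ L := norm_nonneg _
  have hUim : U.im = -κ - a := by rw [ha]; ring
  have hre : tβ * |U.re| ≤ a := by have := Ek_re_abs hU; rw [ha]; linarith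
  have hreabs : |U.re| ≤ tβ⁻¹ * a := by
    rw [← div_eq_inv_mul]; rw [le_div_iff₀ ht]; linarith [hre, mul_comm (|U.re|) tβ]
  have hLa : L ≤ Cβ * a := by
    have h1 : L ≤ |(U + Complex.I * κ).re| + |(U + Complex.I * κ).im| := by
      rw [hL]; exact Complex.norm_le_abs_re_add_abs_im _
    have h2 : (U + Complex.I * (κ:ℂ)).re = U.re := by simp
    have h3 : (U + Complex.I * (κ:ℂ)).im = U.im + κ := by simp
    rw [h2, h3] at h1
    have h4 : |U.im + κ| = a := by rw [hUim]; rw [abs_of_nonpos (by linarith)]; ring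
    rw [h4] at h1
    have : 0 ≤ tβ⁻¹ := by positivity
    rw [hCβ]; nlinarith [hreabs]
  have hUnorm : ‖U‖ ≤ Cβ * (κ + a) := by
    have h1 : ‖U‖ ≤ |U.re| + |U.im| := by
      exact Complex.norm_le_abs_re_add_abs_im _
    have h2 : |U.im| = κ + a := by rw [hUim, abs_of_nonpos (by linarith)]; ring
    have h3 : 0 ≤ tβ⁻¹ := by positivity
    rw [h2] at h1
    rw [hCβ]; nlinarith [hreabs]
  have hr0 : (0:ℝ) < ‖U‖ := by
    have h2 : |U.im| = κ + a := by rw [hUim, abs_of_nonpos (by linarith)]; ring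
    have := Complex.abs_im_le_norm U
    linarith
  -- segment facts
  have hSim : ∀ t : ℝ, (-(Complex.I * (κ:ℂ)) + (t:ℂ) * (U + Complex.I * κ)).im
      = -(κ + t * a) := by
    intro t
    simp only [Complex.add_im, Complex.neg_im, Complex.mul_im, Complex.mul_re, Complex.I_re,
      Complex.I_im, Complex.ofReal_re, Complex.ofReal_im, Complex.add_re]
    rw [hUim]; ring
  have hSnorm : ∀ t : ℝ, 0 ≤ t → t ≤ 1 →
      κ + t * a ≤ ‖-(Complex.I * (κ:ℂ)) + (t:ℂ) * (U + Complex.I * κ)‖ := by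
    intro t ht0 ht1
    have h1 := Complex.abs_im_le_norm (-(Complex.I * (κ:ℂ)) + (t:ℂ) * (U + Complex.I * κ))
    rw [hSim t, abs_neg, abs_of_nonneg (by nlinarith)] at h1
    exact h1
  -- define the pointwise dominating function
  set g3 : ℝ → ℝ := fun t =>
    Real.exp (κ + t*a) * (K * (κ ^ (-(1:ℝ)/3) * ((κ + t*a)^3)⁻¹)) * L with hg3
  have hdenpos : ∀ t ∈ Set.Icc (0:ℝ) 1, (0:ℝ) < κ + t*a := fun t ht => by nlinarith [ht.1]
  have hg3cont : ContinuousOn g3 (Set.Icc 0 1) := by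
    apply ContinuousOn.mul
    apply ContinuousOn.mul
    · exact (Real.continuous_exp.comp
        (continuous_const.add (continuous_id.mul continuous_const))).continuousOn
    · apply ContinuousOn.mul continuousOn_const
      apply ContinuousOn.mul continuousOn_const
      exact ((continuous_const.add (continuous_id.mul continuous_const)).pow 3).continuousOn.inv₀
        (fun t ht => pow_ne_zero 3 (hdenpos t ht).ne')
    · exact continuousOn_const
  have hg3II : IntervalIntegrable g3 volume 0 1 :=
    (hg3cont.mono (by rw [Set.uIcc_of_le (by norm_num : (0:ℝ) ≤ 1)])).intervalIntegrable
  have hg3nonneg : ∀ t ∈ Set.Icc (0:ℝ) 1, 0 ≤ g3 t := by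
    intro t ht
    rw [hg3]
    have := (hdenpos t ht)
    positivity
  -- pointwise bound on the integrand
  have hbound : ∀ t ∈ Set.uIoc (0:ℝ) 1,
      ‖Complex.exp (Complex.I * (-(Complex.I * (κ:ℂ)) + (t:ℂ) * (U + Complex.I * κ))) *
        Φ (-(Complex.I * (κ:ℂ)) + (t:ℂ) * (U + Complex.I * κ)) *
        (U + Complex.I * (κ:ℂ))‖ ≤ g3 t := by
    intro t htI
    rw [Set.uIoc_of_le (by norm_num : (0:ℝ) ≤ 1)] at htI
    have ht0 : 0 ≤ t := le_of_lt htI.1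
    have ht1 : t ≤ 1 := htI.2
    have htIcc : t ∈ Set.Icc (0:ℝ) 1 := ⟨ht0, ht1⟩
    have hSmem := Ek_seg hβ hκ0 hU ht0 ht1
    have hexp : ‖Complex.exp (Complex.I *
        (-(Complex.I * (κ:ℂ)) + (t:ℂ) * (U + Complex.I * κ)))‖ = Real.exp (κ + t*a) := by
      rw [Complex.norm_exp]
      congr 1
      rw [Complex.mul_re, Complex.I_re, Complex.I_im]
      rw [hSim t]; ring
    have hΦS := hΦ _ hSmem
    have hpow := pow103 hκ (by nlinarith : κ ≤ κ + t*a) (hSnorm t ht0 ht1)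
    rw [norm_mul, norm_mul, hexp, hg3, ← hL]
    apply mul_le_mul_of_nonneg_right _ hL0
    apply mul_le_mul_of_nonneg_left _ (Real.exp_pos _).le
    exact hΦS.trans (mul_le_mul_of_nonneg_left hpow hK)
  -- norm of BB
  have houter : ‖Complex.exp (-(Complex.I * U))‖ = Real.exp U.im := by
    rw [Complex.norm_exp]
    congr 1
    rw [Complex.neg_re, Complex.mul_re, Complex.I_re, Complex.I_im]; ring
  have hInt : ‖∫ t in (0:ℝ)..1,
      Complex.exp (Complex.I * (-(Complex.I * (κ:ℂ)) + (t:ℂ) * (U + Complex.I * κ))) *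
        Φ (-(Complex.I * (κ:ℂ)) + (t:ℂ) * (U + Complex.I * κ)) *
        (U + Complex.I * (κ:ℂ))‖ ≤ ∫ t in (0:ℝ)..1, g3 t := by
    have h := intervalIntegral.norm_integral_le_abs_of_norm_le
      ((ae_restrict_iff' measurableSet_uIoc).2 (Filter.Eventually.of_forall hbound)) hg3II
    refine h.trans_eq (abs_of_nonneg ?_)
    exact intervalIntegral.integral_nonneg (by norm_num)
      (fun t ht => hg3nonneg t ht)
  set Icore : ℝ := ∫ t in (0:ℝ)..1, Real.exp (-(1-t)*a) * ((κ + t*a)^3)⁻¹ with hIc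
  have hIcore0 : 0 ≤ Icore := by
    rw [hIc]
    apply intervalIntegral.integral_nonneg (by norm_num)
    intro t ht
    have := hdenpos t ht
    positivity
  have hkey : Real.exp U.im * ∫ t in (0:ℝ)..1, g3 t
      = K * κ ^ (-(1:ℝ)/3) * L * Icore := by
    rw [hIc, ← intervalIntegral.integral_const_mul, ← intervalIntegral.integral_const_mul]
    apply intervalIntegral.integral_congr
    intro t _
    rw [hg3]
    have hmerge : Real.exp U.im * Real.exp (κ + t*a) = Real.exp (-(1-t)*a) := by
      rw [← Real.exp_add, hUim]; congr 1; ring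
    calc Real.exp U.im * (Real.exp (κ + t*a) * (K * (κ ^ (-(1:ℝ)/3) * ((κ + t*a)^3)⁻¹)) * L)
        = (Real.exp U.im * Real.exp (κ + t*a)) * (K * κ ^ (-(1:ℝ)/3) * L * ((κ + t*a)^3)⁻¹) := by
          ring
      _ = Real.exp (-(1-t)*a) * (K * κ ^ (-(1:ℝ)/3) * L * ((κ + t*a)^3)⁻¹) := by rw [hmerge]
      _ = K * κ ^ (-(1:ℝ)/3) * L * (Real.exp (-(1-t)*a) * ((κ + t*a)^3)⁻¹) := by ring
  have hBB : ‖BB κ Φ U‖ ≤ K * κ ^ (-(1:ℝ)/3) * L * Icore := by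
    unfold BB
    rw [norm_mul, houter]
    calc Real.exp U.im * ‖∫ t in (0:ℝ)..1,
          Complex.exp (Complex.I * (-(Complex.I * (κ:ℂ)) + (t:ℂ) * (U + Complex.I * κ))) *
            Φ (-(Complex.I * (κ:ℂ)) + (t:ℂ) * (U + Complex.I * κ)) *
            (U + Complex.I * (κ:ℂ))‖
        ≤ Real.exp U.im * ∫ t in (0:ℝ)..1, g3 t :=
          mul_le_mul_of_nonneg_left hInt (Real.exp_pos _).le
      _ = K * κ ^ (-(1:ℝ)/3) * L * Icore := hkey
  -- the norm power bound
  have h43 : ‖U‖ ^ ((4:ℝ)/3) ≤ Cβ^2 * (κ ^ (-(2:ℝ)/3) * (κ+a)^2) := by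
    have hka0 : (0:ℝ) < κ + a := by linarith
    calc ‖U‖ ^ ((4:ℝ)/3) ≤ (Cβ * (κ+a)) ^ ((4:ℝ)/3) :=
          Real.rpow_le_rpow hr0.le hUnorm (by norm_num)
      _ = Cβ ^ ((4:ℝ)/3) * (κ+a) ^ ((4:ℝ)/3) := Real.mul_rpow hCβ0.le hka0.le
      _ ≤ Cβ^2 * (κ ^ (-(2:ℝ)/3) * (κ+a)^2) := by
          have h1 : Cβ ^ ((4:ℝ)/3) ≤ Cβ^2 := by
            have := Real.rpow_le_rpow_of_exponent_le hCβ1 (by norm_num : (4:ℝ)/3 ≤ 2)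
            refine this.trans_eq ?_
            rw [show (2:ℝ) = ((2:ℕ):ℝ) by norm_num, Real.rpow_natCast]
          have h2 : (κ+a) ^ ((4:ℝ)/3) ≤ κ ^ (-(2:ℝ)/3) * (κ+a)^2 := by
            have e1 : (κ+a) ^ ((4:ℝ)/3) = (κ+a) ^ (-(2:ℝ)/3) * (κ+a)^2 := by
              rw [show ((κ+a):ℝ)^2 = (κ+a) ^ ((2:ℕ):ℝ) by rw [Real.rpow_natCast],
                ← Real.rpow_add hka0]
              norm_num
            rw [e1]
            apply mul_le_mul_of_nonneg_right _ (by positivity)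
            exact Real.rpow_le_rpow_of_nonpos hκ0 (by linarith) (by norm_num)
          calc Cβ ^ ((4:ℝ)/3) * (κ+a) ^ ((4:ℝ)/3)
              ≤ Cβ^2 * (κ+a) ^ ((4:ℝ)/3) :=
                mul_le_mul_of_nonneg_right h1 (Real.rpow_nonneg hka0.le _)
            _ ≤ Cβ^2 * (κ ^ (-(2:ℝ)/3) * (κ+a)^2) :=
                mul_le_mul_of_nonneg_left h2 (by positivity)
  -- final assembly
  have hκmerge : κ ^ (-(2:ℝ)/3) * κ ^ (-(1:ℝ)/3) = κ⁻¹ := by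
    rw [← Real.rpow_add hκ0, show (-(2:ℝ)/3 + -(1:ℝ)/3) = -1 by norm_num, Real.rpow_neg_one]
  have hseg := seg_int_bound hκ ha0
  rw [← hIc] at hseg
  have hX0 : 0 ≤ K * κ ^ (-(1:ℝ)/3) * L * Icore := by positivity
  calc ‖U‖ ^ ((4:ℝ)/3) * ‖BB κ Φ U‖
      ≤ ‖U‖ ^ ((4:ℝ)/3) * (K * κ ^ (-(1:ℝ)/3) * L * Icore) :=
        mul_le_mul_of_nonneg_left hBB (Real.rpow_nonneg hr0.le _)
    _ ≤ (Cβ^2 * (κ ^ (-(2:ℝ)/3) * (κ+a)^2)) * (K * κ ^ (-(1:ℝ)/3) * L * Icore) :=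
        mul_le_mul_of_nonneg_right h43 hX0
    _ ≤ (Cβ^2 * (κ ^ (-(2:ℝ)/3) * (κ+a)^2)) * (K * κ ^ (-(1:ℝ)/3) * (Cβ * a) * Icore) := by
        apply mul_le_mul_of_nonneg_left _ (by positivity)
        apply mul_le_mul_of_nonneg_right _ hIcore0
        exact mul_le_mul_of_nonneg_left hLa (by positivity)
    _ = (K * Cβ^3) * ((κ ^ (-(2:ℝ)/3) * κ ^ (-(1:ℝ)/3))) * (a * (κ+a)^2 * Icore) := by ring
    _ = (K * Cβ^3) * κ⁻¹ * (a * (κ+a)^2 * Icore) := by rw [hκmerge]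
    _ ≤ (K * Cβ^3) * κ⁻¹ * (440 / κ) := by
        apply mul_le_mul_of_nonneg_left hseg (by positivity)
    _ = 440 * Cβ^3 * K / κ^2 := by
        rw [div_eq_mul_inv, div_eq_mul_inv, sq, mul_inv]; ring

lemma wnorm_le {D : Set ℂ} {ν C : ℝ} {φ : ℂ → ℂ} (h : ∀ U ∈ D, ‖U‖ ^ ν * ‖φ U‖ ≤ C) :
    wnorm D ν φ ≤ ENNReal.ofReal C := by
  simp only [wnorm]
  exact iSup₂_le fun U hU => ENNReal.ofReal_le_ofReal (h U hU)

lemma le_wnorm {D : Set ℂ} {ν : ℝ} {φ : ℂ → ℂ} {U : ℂ} (hU : U ∈ D) :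
    ENNReal.ofReal (‖U‖ ^ ν * ‖φ U‖) ≤ wnorm D ν φ := by
  simp only [wnorm]
  exact le_iSup₂ (f := fun (U : ℂ) (_ : U ∈ D) => ENNReal.ofReal (‖U‖ ^ ν * ‖φ U‖)) U hU

lemma wnorm_pt {D : Set ℂ} {ν : ℝ} {φ : ℂ → ℂ} (h : wnorm D ν φ ≠ ⊤) {U : ℂ} (hU : U ∈ D) :
    ‖U‖ ^ ν * ‖φ U‖ ≤ (wnorm D ν φ).toReal := by
  have h2 := ENNReal.toReal_mono h (le_wnorm hU)
  rwa [ENNReal.toReal_ofReal (by positivity)] at h2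

lemma wnorm_pt_le {D : Set ℂ} {ν M : ℝ} {φ : ℂ → ℂ} (hM : 0 ≤ M)
    (h : wnorm D ν φ ≤ ENNReal.ofReal M) {U : ℂ} (hU : U ∈ D) :
    ‖U‖ ^ ν * ‖φ U‖ ≤ M := by
  have h2 := ENNReal.toReal_mono ENNReal.ofReal_ne_top ((le_wnorm hU).trans h)
  rwa [ENNReal.toReal_ofReal hM, ENNReal.toReal_ofReal (by positivity)] at h2

lemma entry_bound {S : ℂ} (hS0 : 0 < ‖S‖) {ν M : ℝ} {φ : ℂ → ℂ}
    (h : ‖S‖ ^ ν * ‖φ S‖ ≤ M) : ‖φ S‖ ≤ M * ‖S‖ ^ (-ν) := by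
  have hp : (0:ℝ) < ‖S‖ ^ ν := Real.rpow_pos_of_pos hS0 ν
  rw [Real.rpow_neg hS0.le, ← div_eq_mul_inv, le_div_iff₀ hp]
  linarith [mul_comm (‖S‖ ^ ν) ‖φ S‖]

lemma prod_bound {S : ℂ} (hS0 : 0 < ‖S‖) {μ ν ρ Mc N : ℝ} {f g : ℂ → ℂ}
    (hMc : 0 ≤ Mc) (hN : 0 ≤ N)
    (hf : ‖f S‖ ≤ Mc * ‖S‖ ^ (-μ)) (hg : ‖g S‖ ≤ N * ‖S‖ ^ (-ν))
    (he : ρ = -μ - ν) : ‖f S * g S‖ ≤ Mc * N * ‖S‖ ^ ρ := by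
  rw [norm_mul, he, show -μ - ν = -μ + -ν by ring, Real.rpow_add hS0]
  calc ‖f S‖ * ‖g S‖ ≤ (Mc * ‖S‖ ^ (-μ)) * (N * ‖S‖ ^ (-ν)) :=
        mul_le_mul hf hg (norm_nonneg _) (by positivity)
    _ = Mc * N * (‖S‖ ^ (-μ) * ‖S‖ ^ (-ν)) := by ring

set_option maxHeartbeats 1600000 in
/-- Under the stated bounds on the entries of `R`, for `κ` large
enough (depending only on `M`, `β₀`), the operator `ℐ` satisfies
`‖ℐ₁[Ψ]‖_{8/3} ≤ b₅(κ⁻²‖Ψ₁‖_{8/3} + ‖Ψ₂‖_{4/3} + ‖Ψ₃‖_{4/3})` and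
`‖ℐ_j[Ψ]‖_{4/3} ≤ b₅ κ⁻²(‖Ψ₁‖_{8/3} + ‖Ψ₂‖_{4/3} + ‖Ψ₃‖_{4/3})`, `j = 2,3`,
with `b₅` independent of `κ`. -/
theorem stmt18 (β₀ : ℝ) (hβ : β₀ ∈ Set.Ioo 0 (Real.pi / 2)) (M : ℝ) (hM : 0 < M) :
    ∃ κ₀ : ℝ, 1 ≤ κ₀ ∧ ∃ b₅ : ℝ, 0 < b₅ ∧ ∀ κ : ℝ, κ₀ ≤ κ →
      ∀ R11 R12 R13 R21 R22 R23 R31 R32 R33 : ℂ → ℂ,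
        AnalyticOnNhd ℂ R11 (Ek β₀ κ) → AnalyticOnNhd ℂ R12 (Ek β₀ κ) →
        AnalyticOnNhd ℂ R13 (Ek β₀ κ) → AnalyticOnNhd ℂ R21 (Ek β₀ κ) →
        AnalyticOnNhd ℂ R22 (Ek β₀ κ) → AnalyticOnNhd ℂ R23 (Ek β₀ κ) →
        AnalyticOnNhd ℂ R31 (Ek β₀ κ) → AnalyticOnNhd ℂ R32 (Ek β₀ κ) →
        AnalyticOnNhd ℂ R33 (Ek β₀ κ) →
        wnorm (Ek β₀ κ) 3 R11 ≤ ENNReal.ofReal M →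
        wnorm (Ek β₀ κ) ((7 : ℝ) / 3) R12 ≤ ENNReal.ofReal M →
        wnorm (Ek β₀ κ) ((7 : ℝ) / 3) R13 ≤ ENNReal.ofReal M →
        wnorm (Ek β₀ κ) ((2 : ℝ) / 3) R21 ≤ ENNReal.ofReal M →
        wnorm (Ek β₀ κ) 2 R22 ≤ ENNReal.ofReal M →
        wnorm (Ek β₀ κ) 2 R23 ≤ ENNReal.ofReal M →
        wnorm (Ek β₀ κ) ((2 : ℝ) / 3) R31 ≤ ENNReal.ofReal M →
        wnorm (Ek β₀ κ) 2 R32 ≤ ENNReal.ofReal M →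
        wnorm (Ek β₀ κ) 2 R33 ≤ ENNReal.ofReal M →
        ∀ Ψ1 Ψ2 Ψ3 : ℂ → ℂ,
          AnalyticOnNhd ℂ Ψ1 (Ek β₀ κ) → AnalyticOnNhd ℂ Ψ2 (Ek β₀ κ) →
          AnalyticOnNhd ℂ Ψ3 (Ek β₀ κ) →
          wnorm (Ek β₀ κ) ((8 : ℝ) / 3) Ψ1 ≠ ⊤ →
          wnorm (Ek β₀ κ) ((4 : ℝ) / 3) Ψ2 ≠ ⊤ →
          wnorm (Ek β₀ κ) ((4 : ℝ) / 3) Ψ3 ≠ ⊤ →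
          wnorm (Ek β₀ κ) ((8 : ℝ) / 3) (B0 (rdot R11 R12 R13 Ψ1 Ψ2 Ψ3)) ≤
            ENNReal.ofReal (b₅ / κ ^ 2) * wnorm (Ek β₀ κ) ((8 : ℝ) / 3) Ψ1 +
            ENNReal.ofReal b₅ * wnorm (Ek β₀ κ) ((4 : ℝ) / 3) Ψ2 +
            ENNReal.ofReal b₅ * wnorm (Ek β₀ κ) ((4 : ℝ) / 3) Ψ3 ∧
          wnorm (Ek β₀ κ) ((4 : ℝ) / 3) (Balpha 1 (rdot R21 R22 R23 Ψ1 Ψ2 Ψ3)) ≤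
            ENNReal.ofReal (b₅ / κ ^ 2) *
              (wnorm (Ek β₀ κ) ((8 : ℝ) / 3) Ψ1 + wnorm (Ek β₀ κ) ((4 : ℝ) / 3) Ψ2 +
                wnorm (Ek β₀ κ) ((4 : ℝ) / 3) Ψ3) ∧
          wnorm (Ek β₀ κ) ((4 : ℝ) / 3) (BB κ (rdot R31 R32 R33 Ψ1 Ψ2 Ψ3)) ≤
            ENNReal.ofReal (b₅ / κ ^ 2) *
              (wnorm (Ek β₀ κ) ((8 : ℝ) / 3) Ψ1 + wnorm (Ek β₀ κ) ((4 : ℝ) / 3) Ψ2 +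
                wnorm (Ek β₀ κ) ((4 : ℝ) / 3) Ψ3) := by
  have ht : 0 < Real.tan β₀ := Real.tan_pos_of_pos_of_lt_pi_div_two hβ.1 hβ.2
  set Cβ : ℝ := 1 + (Real.tan β₀)⁻¹ with hCβdef
  have htinv : (0:ℝ) < (Real.tan β₀)⁻¹ := inv_pos.2 ht
  have hCβ1 : 1 ≤ Cβ := by rw [hCβdef]; linarith
  have hCβ0 : (0:ℝ) < Cβ := lt_of_lt_of_le one_pos hCβ1
  clear_value Cβ
  have hM' : (0:ℝ) ≤ M := hM.le
  have hb0 : (0:ℝ) < 500 * M * Cβ^3 := by positivity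
  refine ⟨1, le_refl 1, 500 * M * Cβ^3, hb0, ?_⟩
  intro κ hκ R11 R12 R13 R21 R22 R23 R31 R32 R33
    _ _ _ _ _ _ _ _ _
    h11 h12 h13 h21 h22 h23 h31 h32 h33
    Ψ1 Ψ2 Ψ3 _ _ _ hT1 hT2 hT3
  have hκ0 : (0:ℝ) < κ := lt_of_lt_of_le one_pos hκ
  set N1 := (wnorm (Ek β₀ κ) ((8:ℝ)/3) Ψ1).toReal with hN1def
  set N2 := (wnorm (Ek β₀ κ) ((4:ℝ)/3) Ψ2).toReal with hN2def
  set N3 := (wnorm (Ek β₀ κ) ((4:ℝ)/3) Ψ3).toReal with hN3def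
  have hN1 : (0:ℝ) ≤ N1 := ENNReal.toReal_nonneg
  have hN2 : (0:ℝ) ≤ N2 := ENNReal.toReal_nonneg
  have hN3 : (0:ℝ) ≤ N3 := ENNReal.toReal_nonneg
  have hW1 : wnorm (Ek β₀ κ) ((8:ℝ)/3) Ψ1 = ENNReal.ofReal N1 := (ENNReal.ofReal_toReal hT1).symm
  have hW2 : wnorm (Ek β₀ κ) ((4:ℝ)/3) Ψ2 = ENNReal.ofReal N2 := (ENNReal.ofReal_toReal hT2).symm
  have hW3 : wnorm (Ek β₀ κ) ((4:ℝ)/3) Ψ3 = ENNReal.ofReal N3 := (ENNReal.ofReal_toReal hT3).symm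
  have hp1 : ∀ S ∈ Ek β₀ κ, ‖S‖ ^ ((8:ℝ)/3) * ‖Ψ1 S‖ ≤ N1 := fun S hS => wnorm_pt hT1 hS
  have hp2 : ∀ S ∈ Ek β₀ κ, ‖S‖ ^ ((4:ℝ)/3) * ‖Ψ2 S‖ ≤ N2 := fun S hS => wnorm_pt hT2 hS
  have hp3 : ∀ S ∈ Ek β₀ κ, ‖S‖ ^ ((4:ℝ)/3) * ‖Ψ3 S‖ ≤ N3 := fun S hS => wnorm_pt hT3 hS
  -- row bounds
  clear_value N1 N2 N3
  have hrow1 : ∀ S ∈ Ek β₀ κ, ‖rdot R11 R12 R13 Ψ1 Ψ2 Ψ3 S‖ ≤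
      (M*N1) * ‖S‖ ^ (-(17/3:ℝ)) + (M*N2 + M*N3) * ‖S‖ ^ (-(11/3:ℝ)) := by
    intro S hS
    have hS0 : (0:ℝ) < ‖S‖ := lt_of_lt_of_le hκ0 (Ek_norm_ge hβ hS)
    have e1 := prod_bound hS0 hM' hN1 (entry_bound hS0 (wnorm_pt_le hM' h11 hS))
      (entry_bound hS0 (hp1 S hS)) (show (-(17/3:ℝ)) = -(3:ℝ) - (8:ℝ)/3 by norm_num)
    have e2 := prod_bound hS0 hM' hN2 (entry_bound hS0 (wnorm_pt_le hM' h12 hS))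
      (entry_bound hS0 (hp2 S hS)) (show (-(11/3:ℝ)) = -((7:ℝ)/3) - (4:ℝ)/3 by norm_num)
    have e3 := prod_bound hS0 hM' hN3 (entry_bound hS0 (wnorm_pt_le hM' h13 hS))
      (entry_bound hS0 (hp3 S hS)) (show (-(11/3:ℝ)) = -((7:ℝ)/3) - (4:ℝ)/3 by norm_num)
    have htri : ‖rdot R11 R12 R13 Ψ1 Ψ2 Ψ3 S‖ ≤
        ‖R11 S * Ψ1 S‖ + ‖R12 S * Ψ2 S‖ + ‖R13 S * Ψ3 S‖ := by
      simp only [rdot]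
      exact norm_add₃_le
    linarith
  have hrow2 : ∀ S ∈ Ek β₀ κ, ‖rdot R21 R22 R23 Ψ1 Ψ2 Ψ3 S‖ ≤
      (M*N1 + M*N2 + M*N3) * ‖S‖ ^ (-(10:ℝ)/3) := by
    intro S hS
    have hS0 : (0:ℝ) < ‖S‖ := lt_of_lt_of_le hκ0 (Ek_norm_ge hβ hS)
    have e1 := prod_bound hS0 hM' hN1 (entry_bound hS0 (wnorm_pt_le hM' h21 hS))
      (entry_bound hS0 (hp1 S hS)) (show (-(10:ℝ)/3) = -((2:ℝ)/3) - (8:ℝ)/3 by norm_num)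
    have e2 := prod_bound hS0 hM' hN2 (entry_bound hS0 (wnorm_pt_le hM' h22 hS))
      (entry_bound hS0 (hp2 S hS)) (show (-(10:ℝ)/3) = -(2:ℝ) - (4:ℝ)/3 by norm_num)
    have e3 := prod_bound hS0 hM' hN3 (entry_bound hS0 (wnorm_pt_le hM' h23 hS))
      (entry_bound hS0 (hp3 S hS)) (show (-(10:ℝ)/3) = -(2:ℝ) - (4:ℝ)/3 by norm_num)
    have htri : ‖rdot R21 R22 R23 Ψ1 Ψ2 Ψ3 S‖ ≤
        ‖R21 S * Ψ1 S‖ + ‖R22 S * Ψ2 S‖ + ‖R23 S * Ψ3 S‖ := by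
      simp only [rdot]
      exact norm_add₃_le
    linarith
  have hrow3 : ∀ S ∈ Ek β₀ κ, ‖rdot R31 R32 R33 Ψ1 Ψ2 Ψ3 S‖ ≤
      (M*N1 + M*N2 + M*N3) * ‖S‖ ^ (-(10:ℝ)/3) := by
    intro S hS
    have hS0 : (0:ℝ) < ‖S‖ := lt_of_lt_of_le hκ0 (Ek_norm_ge hβ hS)
    have e1 := prod_bound hS0 hM' hN1 (entry_bound hS0 (wnorm_pt_le hM' h31 hS))
      (entry_bound hS0 (hp1 S hS)) (show (-(10:ℝ)/3) = -((2:ℝ)/3) - (8:ℝ)/3 by norm_num)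
    have e2 := prod_bound hS0 hM' hN2 (entry_bound hS0 (wnorm_pt_le hM' h32 hS))
      (entry_bound hS0 (hp2 S hS)) (show (-(10:ℝ)/3) = -(2:ℝ) - (4:ℝ)/3 by norm_num)
    have e3 := prod_bound hS0 hM' hN3 (entry_bound hS0 (wnorm_pt_le hM' h33 hS))
      (entry_bound hS0 (hp3 S hS)) (show (-(10:ℝ)/3) = -(2:ℝ) - (4:ℝ)/3 by norm_num)
    have htri : ‖rdot R31 R32 R33 Ψ1 Ψ2 Ψ3 S‖ ≤
        ‖R31 S * Ψ1 S‖ + ‖R32 S * Ψ2 S‖ + ‖R33 S * Ψ3 S‖ := by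
      simp only [rdot]
      exact norm_add₃_le
    linarith
  -- common quantities
  have hinv : (0:ℝ) ≤ (κ^2)⁻¹ := by positivity
  have hCβ3 : (1:ℝ) ≤ Cβ^3 := one_le_pow₀ hCβ1
  have hbκ : (0:ℝ) ≤ 500*M*Cβ^3/κ^2 := by positivity
  have hsum : (0:ℝ) ≤ N1 + N2 + N3 := by linarith
  refine ⟨?_, ?_, ?_⟩
  · -- component 1
    rw [hW1, hW2, hW3, ← ENNReal.ofReal_mul hbκ, ← ENNReal.ofReal_mul hb0.le,
      ← ENNReal.ofReal_mul hb0.le,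
      ← ENNReal.ofReal_add (mul_nonneg hbκ hN1) (mul_nonneg hb0.le hN2),
      ← ENNReal.ofReal_add (add_nonneg (mul_nonneg hbκ hN1) (mul_nonneg hb0.le hN2))
        (mul_nonneg hb0.le hN3)]
    apply wnorm_le
    intro U hU
    refine (comp1 hβ hκ (mul_nonneg hM' hN1)
      (add_nonneg (mul_nonneg hM' hN2) (mul_nonneg hM' hN3)) hrow1 hU).trans ?_
    have key1 : 2*M ≤ 500*M*Cβ^3 := by nlinarith
    have d1 : 2*M*N1*(κ^2)⁻¹ ≤ 500*M*Cβ^3*N1*(κ^2)⁻¹ := by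
      nlinarith [mul_nonneg (mul_nonneg (sub_nonneg.2 key1) hN1) hinv]
    have d2 : 2*M*N2 ≤ 500*M*Cβ^3*N2 := by
      nlinarith [mul_nonneg (sub_nonneg.2 key1) hN2]
    have d3 : 2*M*N3 ≤ 500*M*Cβ^3*N3 := by
      nlinarith [mul_nonneg (sub_nonneg.2 key1) hN3]
    rw [div_eq_mul_inv, div_eq_mul_inv]
    linarith
  · -- component 2
    rw [hW1, hW2, hW3, ← ENNReal.ofReal_add hN1 hN2, ← ENNReal.ofReal_add (add_nonneg hN1 hN2) hN3,
      ← ENNReal.ofReal_mul hbκ]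
    apply wnorm_le
    intro U hU
    refine (comp2 hβ hκ (show (0:ℝ) ≤ M*N1 + M*N2 + M*N3 from add_nonneg (add_nonneg (mul_nonneg hM' hN1) (mul_nonneg hM' hN2)) (mul_nonneg hM' hN3)) hrow2 hU).trans ?_
    have key2 : M*(N1+N2+N3) ≤ 500*M*Cβ^3*(N1+N2+N3) := by
      nlinarith [mul_nonneg hM' hsum]
    have h := mul_le_mul_of_nonneg_right key2 hinv
    rw [div_eq_mul_inv, div_eq_mul_inv]
    linarith
  · -- component 3
    rw [hW1, hW2, hW3, ← ENNReal.ofReal_add hN1 hN2, ← ENNReal.ofReal_add (add_nonneg hN1 hN2) hN3,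
      ← ENNReal.ofReal_mul hbκ]
    apply wnorm_le
    intro U hU
    have h3 := comp3 hβ hκ (show (0:ℝ) ≤ M*N1 + M*N2 + M*N3 from add_nonneg (add_nonneg (mul_nonneg hM' hN1) (mul_nonneg hM' hN2)) (mul_nonneg hM' hN3)) hrow3 hU
    rw [← hCβdef] at h3
    refine h3.trans ?_
    have key3 : 440*Cβ^3*(M*N1 + M*N2 + M*N3) ≤ 500*M*Cβ^3*(N1+N2+N3) := by
      nlinarith [mul_nonneg (mul_nonneg hM' (pow_nonneg hCβ0.le 3)) hsum]
    have h := mul_le_mul_of_nonneg_right key3 hinv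
    rw [div_eq_mul_inv, div_eq_mul_inv]
    linarith
end
end
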